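/- arXiv:1709.01996 — 10 statements merged into one kernel-verified Lean document; each statement's English description precedes it below -/
import Mathlib

section
/- Let f be defined by f(x) = n for x in [(1+1/n)·2^n, (1+2/n)·2^n] (n ≥ 1) and f(x) = 1 otherwise. Then for every x > 0, lim_{n→∞} f(2^n x) = 1, but f is unbounded. -/
open Filter Set

/-
Write the interval of index `m` as `2^m · [1 + 1/m, 1 + 2/m]`. Fix `x > 0`; the orbit
`{2^k x : k ∈ ℤ}` meets `(1, 2]` in exactly one point `r > 1`, so it avoids `(1, 1 + δ]` for
`δ = (r - 1)/2`. If `2^n x` lay in the interval of index `m`, then `2^(n-m) x ∈ (1, 1 + 2/m]`;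
since `2^n x ≤ 3 · 2^m`, the index `m` grows with `n`, and once `2/m ≤ δ` this is impossible.
Unboundedness is witnessed by the left endpoints `(1 + 1/n) 2^n`, where `exf ≥ n`.
-/

/-- The counterexample function: `f x = n` on the interval
`[(1+1/n)·2^n, (1+2/n)·2^n]` (largest such `n` if several apply), and `1` otherwise. -/
noncomputable def exf (x : ℝ) : ℝ :=
  sSup (insert (1:ℝ)
    {y : ℝ | ∃ n : ℕ, 1 ≤ n ∧ y = (n:ℝ) ∧
      x ∈ Set.Icc ((1 + 1/(n:ℝ)) * 2^n) ((1 + 2/(n:ℝ)) * 2^n)})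

theorem eq_of_zpow_mul_mem_Ioc {α : Type*} [Field α] [LinearOrder α] [IsStrictOrderedRing α]
    {b y : α} (hb : 1 < b) {k l : ℤ} (hk : b ^ k * y ∈ Ioc 1 b) (hl : b ^ l * y ∈ Ioc 1 b) :
    k = l := by
  have hb₀ : 0 < b := one_pos.trans hb
  have le_of_mem : ∀ {k l : ℤ}, b ^ k * y ∈ Ioc 1 b → b ^ l * y ∈ Ioc 1 b → k ≤ l := by
    intro k l hk hl
    by_contra! hlk
    have hy : 0 < y := pos_of_mul_pos_right (one_pos.trans hl.1) (zpow_pos hb₀ _).le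
    have : b * (b ^ l * y) ≤ b ^ k * y := by
      rw [← mul_assoc, ← zpow_one_add₀ hb₀.ne', add_comm]
      gcongr
      exacts [hb.le, hlk]
    nlinarith [hk.2, hl.1]
  exact le_antisymm (le_of_mem hk hl) (le_of_mem hl hk)

theorem exists_pos_forall_two_zpow_mul_notMem_Ioc {x : ℝ} (hx : 0 < x) :
    ∃ δ > 0, ∀ k : ℤ, (2 : ℝ) ^ k * x ∉ Ioc 1 (1 + δ) := by
  obtain ⟨j, hj⟩ := exists_mem_Ioc_zpow hx one_lt_two
  have hr : (2 : ℝ) ^ (-j) * x ∈ Ioc 1 2 := by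
    have h2j : (0 : ℝ) < 2 ^ j := zpow_pos two_pos j
    rw [zpow_neg, ← div_eq_inv_mul, mem_Ioc, one_lt_div h2j, div_le_iff₀ h2j, mul_comm,
      ← zpow_add_one₀ two_ne_zero]
    exact hj
  refine ⟨(2 ^ (-j) * x - 1) / 2, by linarith [hr.1], fun k hk ↦ ?_⟩
  obtain rfl : k = -j := eq_of_zpow_mul_mem_Ioc one_lt_two ⟨hk.1, by linarith [hk.2, hr.2]⟩ hr
  linarith [hk.2, hr.1]

def exceptionalInterval (n : ℕ) : Set ℝ :=
  Icc ((1 + 1 / (n : ℝ)) * 2 ^ n) ((1 + 2 / (n : ℝ)) * 2 ^ n)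

theorem exf_eq_sSup (x : ℝ) :
    exf x = sSup (insert 1 {y : ℝ | ∃ n : ℕ, 1 ≤ n ∧ y = n ∧ x ∈ exceptionalInterval n}) :=
  rfl

theorem div_two_pow_mem_Ioc_of_mem_exceptionalInterval {m : ℕ} {y : ℝ} (hm : 1 ≤ m)
    (hy : y ∈ exceptionalInterval m) : y / 2 ^ m ∈ Ioc 1 (1 + 2 / (m : ℝ)) := by
  have h2m : (0 : ℝ) < 2 ^ m := by positivity
  have hm' : (0 : ℝ) < m := by exact_mod_cast hm
  rw [mem_Ioc, one_lt_div h2m, div_le_iff₀ h2m]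
  refine ⟨lt_of_lt_of_le ?_ hy.1, hy.2⟩
  nlinarith [one_div_pos.2 hm']

theorem eventually_forall_two_pow_mul_notMem_exceptionalInterval {x : ℝ} (hx : 0 < x) :
    ∀ᶠ n : ℕ in atTop, ∀ m, 1 ≤ m → 2 ^ n * x ∉ exceptionalInterval m := by
  obtain ⟨δ, hδ, hnotMem⟩ := exists_pos_forall_two_zpow_mul_notMem_Ioc hx
  obtain ⟨M, hM⟩ := exists_nat_gt (2 / δ)
  have hgrow : Tendsto (fun n : ℕ ↦ (2 : ℝ) ^ n * x) atTop atTop :=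
    (tendsto_pow_atTop_atTop_of_one_lt one_lt_two).atTop_mul_const hx
  filter_upwards [hgrow.eventually_gt_atTop (3 * 2 ^ M)] with n hn m hm hmem
  obtain ⟨hlo, hhi⟩ := div_two_pow_mem_Ioc_of_mem_exceptionalInterval hm hmem
  have hm' : (1 : ℝ) ≤ m := by exact_mod_cast hm
  have h2m : (0 : ℝ) < 2 ^ m := by positivity
  have hMm : M < m := by
    have : 2 ^ n * x ≤ 3 * (2 : ℝ) ^ m := by
      rw [div_le_iff₀ h2m] at hhi
      nlinarith [div_le_self zero_le_two hm']
    exact (pow_lt_pow_iff_right₀ (one_lt_two (α := ℝ))).1 (by linarith)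
  have hmδ : 2 / (m : ℝ) ≤ δ := by
    rw [div_lt_iff₀ hδ] at hM
    rw [div_le_iff₀ (by positivity)]
    nlinarith [(Nat.cast_lt (α := ℝ)).2 hMm]
  have hshift : (2 : ℝ) ^ (n - m : ℤ) * x = 2 ^ n * x / 2 ^ m := by
    rw [zpow_sub₀ two_ne_zero, zpow_natCast, zpow_natCast, div_mul_eq_mul_div₀]
  exact hnotMem (n - m) (hshift ▸ ⟨hlo, by linarith⟩)

theorem exf_eq_one_of_forall_notMem {x : ℝ} (h : ∀ n, 1 ≤ n → x ∉ exceptionalInterval n) :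
    exf x = 1 := by
  have hempty : {y : ℝ | ∃ n : ℕ, 1 ≤ n ∧ y = (n : ℝ) ∧ x ∈ exceptionalInterval n} = ∅ :=
    eq_empty_iff_forall_notMem.2 fun _ ⟨n, hn, _, hx⟩ ↦ h n hn hx
  rw [exf_eq_sSup, hempty, insert_empty_eq, csSup_singleton]

theorem le_exf_of_mem_exceptionalInterval {n : ℕ} {x : ℝ} (hn : 1 ≤ n)
    (hx : x ∈ exceptionalInterval n) : (n : ℝ) ≤ exf x := by
  rw [exf_eq_sSup]
  refine le_csSup ⟨max 1 x, ?_⟩ (mem_insert_of_mem _ ⟨n, hn, rfl, hx⟩)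
  rintro _ (rfl | ⟨m, -, rfl, hm⟩)
  · exact le_max_left _ _
  · calc (m : ℝ) ≤ 2 ^ m := by exact_mod_cast Nat.lt_two_pow_self.le
      _ ≤ (1 + 1 / (m : ℝ)) * 2 ^ m := le_mul_of_one_le_left (by positivity) (by simp)
      _ ≤ x := hm.1
      _ ≤ max 1 x := le_max_right _ _

theorem statement_0 :
    (∀ x : ℝ, 0 < x →
      Filter.Tendsto (fun n : ℕ => exf (2^n * x)) Filter.atTop (nhds 1)) ∧
    (∀ M : ℝ, ∃ x : ℝ, 0 ≤ x ∧ M < exf x) := by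
  refine ⟨fun x hx ↦ tendsto_const_nhds.congr' ?_, fun M ↦ ?_⟩
  · filter_upwards [eventually_forall_two_pow_mul_notMem_exceptionalInterval hx] with n hn
    exact (exf_eq_one_of_forall_notMem hn).symm
  · obtain ⟨n, hn⟩ := exists_nat_gt M
    have hmem : (1 + 1 / ((n + 1 : ℕ) : ℝ)) * 2 ^ (n + 1) ∈ exceptionalInterval (n + 1) :=
      left_mem_Icc.2 (by gcongr; norm_num)
    refine ⟨_, hmem.1.trans' (by positivity), ?_⟩
    calc M < n := hn
      _ ≤ (n + 1 : ℕ) := by exact_mod_cast n.le_succ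
      _ ≤ _ := le_exf_of_mem_exceptionalInterval (Nat.le_add_left 1 n) hmem
end

section
/- If f ∈ RL(p, r, ρ) is regularly log-periodic and ultimately monotone, then f is O-regularly varying, i.e. 0 < liminf_{x→∞} f(λx)/f(x) ≤ limsup_{x→∞} f(λx)/f(x) < ∞ for every λ > 0. -/
/-!
Choose a continuity point `x₁ > 0` of `p`; it exists because a right-continuous function has a
dense set of continuity points (Baire). Along `tₙ = x₁ rⁿ` we have `f(tₙ) ~ p(x₁) tₙ^ρ ℓ(tₙ)`, so
`f(tₙ₊ⱼ)/f(tₙ) → (rʲ)^ρ ∈ (0, ∞)` for each `j`. Given `λ`, there is a `j` such that for all large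
`x` both `x` and `λx` lie in a common window `[tₙ, tₙ₊ⱼ]`, and monotonicity of `f` on that window
traps `f(λx)/f(x)` between `f(tₙ)/f(tₙ₊ⱼ)` and its inverse.
-/

open Filter Set Real Topology

def MemP (r : ℝ) (p : ℝ → ℝ) : Prop :=
  (∀ x > (0:ℝ), 0 < p x) ∧
  (∃ M : ℝ, ∀ x > (0:ℝ), p x ≤ M) ∧
  (∀ x > (0:ℝ), ContinuousWithinAt p (Set.Ici x) x) ∧
  (∃ c > (0:ℝ), ∀ x ∈ Set.Icc (1:ℝ) r, c ≤ p x) ∧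
  (∀ x > (0:ℝ), p (x * r) = p x)

def SlowlyVarying (l : ℝ → ℝ) : Prop :=
  (∀ᶠ x in Filter.atTop, 0 < l x) ∧
  ∀ lam > (0:ℝ),
    Filter.Tendsto (fun x : ℝ => l (lam * x) / l x) Filter.atTop (nhds 1)

def MemRL (f : ℝ → ℝ) (p : ℝ → ℝ) (r ρ : ℝ) (l : ℝ → ℝ) : Prop :=
  ∀ x > (0:ℝ), ContinuousAt p x →
    Filter.Tendsto (fun n : ℕ => f (x * r^n) / ((x * r^n) ^ ρ * l (x * r^n)))
      Filter.atTop (nhds (p x))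

def UltimatelyMonotone (f : ℝ → ℝ) : Prop :=
  ∃ x₀ : ℝ, MonotoneOn f (Set.Ici x₀) ∨ AntitoneOn f (Set.Ici x₀)

/- Right-continuity at `a` makes `q` oscillate by less than `ε` on some `(a, b)`, so the open
sets of points where the oscillation is below `1/(k+1)` are dense; by Baire their intersection,
which consists of continuity points, is dense too. -/
theorem dense_setOf_continuousAt_of_continuousWithinAt_Ici {Y : Type*} [PseudoMetricSpace Y]
    {q : ℝ → Y} (hq : ∀ x, ContinuousWithinAt q (Ici x) x) :
    Dense {x | ContinuousAt q x} := by
  set U : ℝ → Set ℝ := fun ε =>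
    {x | ∃ a b, x ∈ Ioo a b ∧ ∀ y ∈ Ioo a b, ∀ z ∈ Ioo a b, dist (q y) (q z) < ε}
  have hU_open (ε : ℝ) : IsOpen (U ε) := by
    rw [isOpen_iff_mem_nhds]
    rintro x ⟨a, b, hx, hab⟩
    exact mem_of_superset (Ioo_mem_nhds hx.1 hx.2) fun y hy => ⟨a, b, hy, hab⟩
  have hU_dense (ε : ℝ) (hε : 0 < ε) : Dense (U ε) := by
    intro x
    obtain ⟨b, hxb, hb⟩ :=
      mem_nhdsGE_iff_exists_Ico_subset.1 (hq x (Metric.ball_mem_nhds (q x) (half_pos hε)))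
    have hsub : Ioo x b ⊆ U ε := fun y hy => ⟨x, b, hy, fun z hz w hw => by
      have hz' : dist (q z) (q x) < ε / 2 := hb (Ioo_subset_Ico_self hz)
      have hw' : dist (q w) (q x) < ε / 2 := hb (Ioo_subset_Ico_self hw)
      linarith [dist_triangle_right (q z) (q w) (q x)]⟩
    apply closure_mono hsub
    rw [closure_Ioo hxb.ne]
    exact left_mem_Icc.2 (le_of_lt hxb)
  have hG : Dense (⋂ k : ℕ, U (1 / (k + 1))) :=
    dense_iInter_of_isOpen_nat (fun _ => hU_open _) (fun _ => hU_dense _ Nat.one_div_pos_of_nat)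
  refine hG.mono fun x hx => Metric.continuousAt_iff'.2 fun ε hε => ?_
  obtain ⟨k, hk⟩ := exists_nat_one_div_lt hε
  obtain ⟨a, b, hxab, hab⟩ := mem_iInter.1 hx k
  filter_upwards [Ioo_mem_nhds hxab.1 hxab.2] with y hy using (hab y hy x hxab).trans hk

theorem exists_pos_continuousAt_of_continuousWithinAt_Ici {Y : Type*} [PseudoMetricSpace Y]
    {p : ℝ → Y} (hp : ∀ x > 0, ContinuousWithinAt p (Ici x) x) :
    ∃ x > 0, ContinuousAt p x := by
  have hq (y : ℝ) : ContinuousWithinAt (p ∘ exp) (Ici y) y :=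
    (hp _ (exp_pos y)).comp continuous_exp.continuousWithinAt fun _ hz => exp_le_exp.2 hz
  obtain ⟨y, hy⟩ := (dense_setOf_continuousAt_of_continuousWithinAt_Ici hq).nonempty
  refine ⟨exp y, exp_pos y, ?_⟩
  have hlog : ContinuousAt ((p ∘ exp) ∘ log) (exp y) :=
    ContinuousAt.comp (by rwa [log_exp]) (continuousAt_log (exp_pos y).ne')
  refine hlog.congr ?_
  filter_upwards [eventually_gt_nhds (exp_pos y)] with z hz
  simp [exp_log hz]

theorem Filter.Tendsto.div_of_div {α : Type*} {F : Filter α} {u₁ u₂ v₁ v₂ : α → ℝ} {P L : ℝ}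
    (h₁ : Tendsto (fun a => u₁ a / v₁ a) F (𝓝 P)) (h₂ : Tendsto (fun a => u₂ a / v₂ a) F (𝓝 P))
    (hP : P ≠ 0) (hv : Tendsto (fun a => v₂ a / v₁ a) F (𝓝 L)) :
    Tendsto (fun a => u₂ a / u₁ a) F (𝓝 L) := by
  have h := (h₂.mul hv).div h₁ hP
  rw [mul_div_cancel_left₀ _ hP] at h
  refine h.congr' ?_
  filter_upwards [h₁.eventually_ne hP, h₂.eventually_ne hP] with a ha₁ ha₂
  rw [div_ne_zero_iff] at ha₁ ha₂
  simp only [Pi.div_apply]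
  field_simp [ha₁.1, ha₁.2, ha₂.2]

theorem SlowlyVarying.tendsto_rpow_mul_div {l : ℝ → ℝ} (hl : SlowlyVarying l) (ρ : ℝ) {lam : ℝ}
    (hlam : 0 < lam) :
    Tendsto (fun y => (lam * y) ^ ρ * l (lam * y) / (y ^ ρ * l y)) atTop (𝓝 (lam ^ ρ)) := by
  have h := (hl.2 lam hlam).const_mul (lam ^ ρ)
  rw [mul_one] at h
  refine h.congr' ?_
  filter_upwards [eventually_gt_atTop 0] with y hy
  rw [mul_rpow hlam.le hy.le, mul_assoc, mul_div_assoc,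
    mul_div_mul_left _ _ (rpow_pos_of_pos hy ρ).ne']

theorem Filter.Tendsto.exists_pos_eventually_mem_Icc_inv {α : Type*} {F : Filter α} {u : α → ℝ}
    {L : ℝ} (h : Tendsto u F (𝓝 L)) (hL : 0 < L) : ∃ c > 0, ∀ᶠ a in F, u a ∈ Icc c c⁻¹ := by
  set c := min L L⁻¹ / 2
  have hc : 0 < c := by positivity
  have hc_min : c < min L L⁻¹ := half_lt_self (by positivity)
  have hcL : c < L := hc_min.trans_le (min_le_left _ _)
  have hLc : L < c⁻¹ := (lt_inv_comm₀ hL hc).2 (hc_min.trans_le (min_le_right _ _))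
  exact ⟨c, hc, h.eventually (Icc_mem_nhds hcL hLc)⟩

theorem tendsto_const_mul_pow_atTop_of_one_lt {r x₁ : ℝ} (hr : 1 < r) (hx₁ : 0 < x₁) :
    Tendsto (fun n : ℕ => x₁ * r ^ n) atTop atTop :=
  (tendsto_pow_atTop_atTop_of_one_lt hr).const_mul_atTop hx₁

section MemRL

variable {f p l : ℝ → ℝ} {r ρ x₁ : ℝ}

theorem MemRL.eventually_pos (hRL : MemRL f p r ρ l) (hl : SlowlyVarying l) (hr : 1 < r)
    (hx₁ : 0 < x₁) (hpx : 0 < p x₁) (hcont : ContinuousAt p x₁) :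
    ∀ᶠ n : ℕ in atTop, 0 < f (x₁ * r ^ n) := by
  have hg : ∀ᶠ y in atTop, 0 < y ^ ρ * l y := by
    filter_upwards [hl.1, eventually_gt_atTop 0] with y hly hy
    exact mul_pos (rpow_pos_of_pos hy ρ) hly
  filter_upwards [(hRL x₁ hx₁ hcont).eventually (lt_mem_nhds hpx),
    (tendsto_const_mul_pow_atTop_of_one_lt hr hx₁).eventually hg] with n hfg hgn
  exact (div_pos_iff_of_pos_right hgn).1 hfg

theorem MemRL.tendsto_div_shift (hRL : MemRL f p r ρ l) (hl : SlowlyVarying l) (hr : 1 < r)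
    (hx₁ : 0 < x₁) (hpx : p x₁ ≠ 0) (hcont : ContinuousAt p x₁) (j : ℕ) :
    Tendsto (fun n : ℕ => f (x₁ * r ^ (n + j)) / f (x₁ * r ^ n)) atTop (𝓝 ((r ^ j) ^ ρ)) := by
  have hA := hRL x₁ hx₁ hcont
  refine hA.div_of_div (hA.comp (tendsto_add_atTop_nat j)) hpx ?_
  have hshift (n : ℕ) : x₁ * r ^ (n + j) = r ^ j * (x₁ * r ^ n) := by ring
  simp only [hshift]
  exact (hl.tendsto_rpow_mul_div ρ (pow_pos (zero_lt_one.trans hr) j)).comp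
    (tendsto_const_mul_pow_atTop_of_one_lt hr hx₁)

end MemRL

theorem eventually_exists_mem_Icc_const_mul_pow {r x₁ : ℝ} (hr : 1 < r) (hx₁ : 0 < x₁) (N : ℕ) :
    ∀ᶠ x in atTop, ∃ n ≥ N, x ∈ Icc (x₁ * r ^ n) (x₁ * r ^ (n + 1)) := by
  filter_upwards [eventually_ge_atTop (x₁ * r ^ N)] with x hx
  have hN : r ^ N ≤ x / x₁ := (le_div_iff₀ hx₁).2 (by linarith)
  obtain ⟨n, hn, hn'⟩ := exists_nat_pow_near ((one_le_pow₀ hr.le).trans hN) hr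
  refine ⟨n, Nat.lt_succ_iff.1 ((pow_lt_pow_iff_right₀ hr).1 (hN.trans_lt hn')), ?_, ?_⟩
  · rwa [le_div_iff₀ hx₁, mul_comm] at hn
  · rw [div_lt_iff₀ hx₁, mul_comm] at hn'
    exact hn'.le

theorem exists_eventually_mem_Icc_const_mul_pow {r x₁ lam : ℝ} (hr : 1 < r) (hx₁ : 0 < x₁)
    (hlam : 0 < lam) : ∃ j : ℕ, ∀ N : ℕ, ∀ᶠ x in atTop, ∃ n ≥ N,
      x ∈ Icc (x₁ * r ^ n) (x₁ * r ^ (n + j)) ∧ lam * x ∈ Icc (x₁ * r ^ n) (x₁ * r ^ (n + j)) := by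
  obtain ⟨k, hk⟩ := pow_unbounded_of_one_lt (max lam lam⁻¹) hr
  have hlamk : lam ≤ r ^ k := (le_max_left _ _).trans hk.le
  have hlamk' : 1 ≤ lam * r ^ k := by
    have := (le_max_right lam lam⁻¹).trans hk.le
    rwa [inv_le_iff_one_le_mul₀' hlam] at this
  refine ⟨2 * k + 1, fun N => ?_⟩
  filter_upwards [eventually_exists_mem_Icc_const_mul_pow hr hx₁ (N + k)] with x ⟨n, hn, hxn⟩
  obtain ⟨m, rfl⟩ := Nat.exists_eq_add_of_le' (le_of_add_le_right hn)
  refine ⟨m, by omega, ?_⟩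
  set a := x₁ * r ^ m
  set s := r ^ k
  have ha : 0 < a := by positivity
  have hs : 1 ≤ s := one_le_pow₀ hr.le
  have e₁ : x₁ * r ^ (m + k) = a * s := by ring
  have e₂ : x₁ * r ^ (m + k + 1) = a * s * r := by ring
  have e₃ : x₁ * r ^ (m + (2 * k + 1)) = a * s * r * s := by ring
  rw [e₁, e₂] at hxn
  rw [e₃]
  obtain ⟨hsx, hxs⟩ := hxn
  have has : a ≤ a * s := le_mul_of_one_le_right ha.le hs
  refine ⟨⟨has.trans hsx, hxs.trans (le_mul_of_one_le_right (by positivity) hs)⟩, ?_, ?_⟩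
  · calc a ≤ a * (lam * s) := le_mul_of_one_le_right ha.le hlamk'
      _ = lam * (a * s) := by ring
      _ ≤ lam * x := mul_le_mul_of_nonneg_left hsx hlam.le
  · calc lam * x ≤ s * x := mul_le_mul_of_nonneg_right hlamk (ha.le.trans (has.trans hsx))
      _ ≤ s * (a * s * r) := mul_le_mul_of_nonneg_left hxs (by positivity)
      _ = a * s * r * s := by ring

theorem div_mem_Icc_of_monotoneOn {f : ℝ → ℝ} {a b c x y : ℝ} (hf : MonotoneOn f (Icc a b))
    (hc : 0 < c) (ha : 0 < f a) (hab : f b / f a ≤ c⁻¹) (hx : x ∈ Icc a b) (hy : y ∈ Icc a b) :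
    f y / f x ∈ Icc c c⁻¹ := by
  have hleft : a ∈ Icc a b := left_mem_Icc.2 (hx.1.trans hx.2)
  have hright : b ∈ Icc a b := right_mem_Icc.2 (hx.1.trans hx.2)
  have hfb : 0 < f b := ha.trans_le (hf hleft hright (hx.1.trans hx.2))
  have hfx : 0 < f x := ha.trans_le (hf hleft hx hx.1)
  constructor
  · calc c ≤ f a / f b := by
          rw [← inv_div]
          exact (le_inv_comm₀ hc (by positivity)).2 hab
      _ ≤ f y / f x :=
          div_le_div₀ (ha.trans_le (hf hleft hy hy.1)).le (hf hleft hy hy.1) hfx (hf hx hright hx.2)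
  · calc f y / f x ≤ f b / f a := div_le_div₀ hfb.le (hf hy hright hy.2) ha (hf hleft hx hx.1)
      _ ≤ c⁻¹ := hab

theorem div_mem_Icc_of_antitoneOn {f : ℝ → ℝ} {a b c x y : ℝ} (hf : AntitoneOn f (Icc a b))
    (hc : 0 < c) (ha : 0 < f a) (hab : c ≤ f b / f a) (hx : x ∈ Icc a b) (hy : y ∈ Icc a b) :
    f y / f x ∈ Icc c c⁻¹ := by
  have hleft : a ∈ Icc a b := left_mem_Icc.2 (hx.1.trans hx.2)
  have hright : b ∈ Icc a b := right_mem_Icc.2 (hx.1.trans hx.2)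
  have hfb : 0 < f b := (div_pos_iff_of_pos_right ha).1 (hc.trans_le hab)
  have hfx : 0 < f x := hfb.trans_le (hf hx hright hx.2)
  constructor
  · calc c ≤ f b / f a := hab
      _ ≤ f y / f x := div_le_div₀ (hfb.trans_le (hf hy hright hy.2)).le (hf hy hright hy.2)
          hfx (hf hleft hx hx.1)
  · calc f y / f x ≤ f a / f b := div_le_div₀ ha.le (hf hleft hy hy.1) hfb (hf hx hright hx.2)
      _ = (f b / f a)⁻¹ := (inv_div _ _).symm
      _ ≤ c⁻¹ := inv_anti₀ hc hab

theorem UltimatelyMonotone.exists_eventually_div_mem_Icc {f : ℝ → ℝ} {r x₁ : ℝ}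
    (hf : UltimatelyMonotone f) (hr : 1 < r) (hx₁ : 0 < x₁)
    (hpos : ∀ᶠ n : ℕ in atTop, 0 < f (x₁ * r ^ n))
    (hratio : ∀ j : ℕ, ∃ c > 0,
      ∀ᶠ n : ℕ in atTop, f (x₁ * r ^ (n + j)) / f (x₁ * r ^ n) ∈ Icc c c⁻¹)
    {lam : ℝ} (hlam : 0 < lam) : ∃ c > 0, ∀ᶠ x in atTop, f (lam * x) / f x ∈ Icc c c⁻¹ := by
  obtain ⟨x₀, hmono⟩ := hf
  obtain ⟨j, hwindow⟩ := exists_eventually_mem_Icc_const_mul_pow hr hx₁ hlam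
  obtain ⟨c, hc, hcj⟩ := hratio j
  have hx₀ := (tendsto_const_mul_pow_atTop_of_one_lt hr hx₁).eventually_ge_atTop x₀
  obtain ⟨N, hN⟩ := eventually_atTop.1 (hpos.and (hcj.and hx₀))
  refine ⟨c, hc, ?_⟩
  filter_upwards [hwindow N] with x ⟨n, hn, hx, hlx⟩
  obtain ⟨hfn, hcn, hx₀n⟩ := hN n hn
  have hsub : Icc (x₁ * r ^ n) (x₁ * r ^ (n + j)) ⊆ Ici x₀ := fun y hy => hx₀n.trans hy.1
  rcases hmono with h | h
  · exact div_mem_Icc_of_monotoneOn (h.mono hsub) hc hfn hcn.2 hx hlx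
  · exact div_mem_Icc_of_antitoneOn (h.mono hsub) hc hfn hcn.1 hx hlx

theorem statement_2_general (f p : ℝ → ℝ) (r ρ : ℝ) (l : ℝ → ℝ)
    (hr : 1 < r) (hl : SlowlyVarying l) (hp : MemP r p)
    (hRL : MemRL f p r ρ l) (hmon : UltimatelyMonotone f) :
    ∀ lam > (0:ℝ),
      (∃ c > (0:ℝ), ∀ᶠ x in Filter.atTop, c ≤ f (lam * x) / f x) ∧
      (∃ C : ℝ, ∀ᶠ x in Filter.atTop, f (lam * x) / f x ≤ C) := by
  intro lam hlam
  obtain ⟨hp_pos, -, hp_rc, -, -⟩ := hp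
  obtain ⟨x₁, hx₁, hcont⟩ := exists_pos_continuousAt_of_continuousWithinAt_Ici hp_rc
  have hpx := hp_pos x₁ hx₁
  have hratio (j : ℕ) :=
    (hRL.tendsto_div_shift hl hr hx₁ hpx.ne' hcont j).exists_pos_eventually_mem_Icc_inv
      (rpow_pos_of_pos (pow_pos (zero_lt_one.trans hr) j) ρ)
  obtain ⟨c, hc, hev⟩ :=
    hmon.exists_eventually_div_mem_Icc hr hx₁ (hRL.eventually_pos hl hr hx₁ hpx hcont) hratio hlam
  exact ⟨⟨c, hc, hev.mono fun _ h => h.1⟩, ⟨c⁻¹, hev.mono fun _ h => h.2⟩⟩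

theorem statement_2 (f p : ℝ → ℝ) (r ρ : ℝ) (l : ℝ → ℝ)
    (hf0 : ∀ x ≥ (0:ℝ), 0 ≤ f x) (hfm : Measurable f)
    (hr : 1 < r) (hl : SlowlyVarying l) (hp : MemP r p)
    (hRL : MemRL f p r ρ l) (hmon : UltimatelyMonotone f) :
    ∀ lam > (0:ℝ),
      (∃ c > (0:ℝ), ∀ᶠ x in Filter.atTop, c ≤ f (lam * x) / f x) ∧
      (∃ C : ℝ, ∀ᶠ x in Filter.atTop, f (lam * x) / f x ≤ C) :=
  statement_2_general f p r ρ l hr hl hp hRL hmon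
end

section
/- Let f(x) = x^ρ ℓ(x) p(x) where ℓ is slowly varying at infinity, ρ ∈ ℝ, r > 1, and p is a positive, bounded, right-continuous function, bounded away from zero on [1,r], with p(xr) = p(x) for all x > 0. Then f^*(λ) := limsup_{x→∞} f(λx)/f(x) equals λ^ρ · sup_{x∈[1,r]} p(λx)/p(x) for every λ > 0. -/
open Filter Set Real

open Topology

/-!
Writing `g x = p (λx) / p x`, for `x > 0` the ratio `f (λx) / f x` factors as
`λ^ρ · (ℓ(λx)/ℓ(x)) · g x`. The middle factor tends to `1`, so the limsup is `λ^ρ` times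
the limsup of `g`. Since `g` inherits the multiplicative period `r` of `p`, on `[1, ∞)` it
takes exactly the values of `g` on `[1, r]`, each of them along the sequence `y rⁿ → ∞`;
hence its limsup is the supremum of those values.
-/
section MulPeriodic

variable {α : Type*} {g : ℝ → α} {r : ℝ}

theorem mul_periodic_mul_pow (hg : ∀ x > 0, g (x * r) = g x) (hr : 0 < r) {x : ℝ}
    (hx : 0 < x) (n : ℕ) : g (x * r ^ n) = g x := by
  induction n with
  | zero => simp
  | succ n ih => rw [pow_succ, ← mul_assoc, hg _ (by positivity), ih]

theorem mul_periodic_mem_image_Icc (hg : ∀ x > 0, g (x * r) = g x) (hr : 1 < r) {x : ℝ}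
    (hx : 1 ≤ x) : g x ∈ g '' Icc 1 r := by
  have hr₀ : 0 < r := one_pos.trans hr
  obtain ⟨n, hn, hn'⟩ := exists_nat_pow_near hx hr
  have hrn : 0 < r ^ n := pow_pos hr₀ n
  refine ⟨x / r ^ n, ⟨(one_le_div hrn).2 hn, ?_⟩, ?_⟩
  · rw [div_le_iff₀ hrn, mul_comm, ← pow_succ]
    exact hn'.le
  · rw [← mul_periodic_mul_pow hg hr₀ (by positivity) n, div_mul_cancel₀ _ hrn.ne']

theorem mul_periodic_frequently_eq (hg : ∀ x > 0, g (x * r) = g x) (hr : 1 < r) {y : ℝ}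
    (hy : 0 < y) : ∃ᶠ x in atTop, g x = g y := by
  have hseq : Tendsto (fun n : ℕ => y * r ^ n) atTop atTop :=
    (tendsto_pow_atTop_atTop_of_one_lt hr).const_mul_atTop hy
  exact hseq.frequently (Frequently.of_forall fun n =>
    mul_periodic_mul_pow hg (one_pos.trans hr) hy n)

end MulPeriodic

theorem limsup_eq_csSup_of_frequently_eq {ι : Type*} {f : Filter ι} {g : ι → ℝ} {T : Set ℝ}
    (hne : T.Nonempty) (hbdd : BddAbove T) (hmem : ∀ᶠ x in f, g x ∈ T)
    (hfreq : ∀ t ∈ T, ∃ᶠ x in f, g x = t) : limsup g f = sSup T := by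
  have hle : ∀ᶠ x in f, g x ≤ sSup T := hmem.mono fun _ hx => le_csSup hbdd hx
  obtain ⟨t, ht⟩ := hne
  refine le_antisymm (limsup_le_of_le ?_ hle) (csSup_le ⟨t, ht⟩ fun s hs => ?_)
  · exact IsCoboundedUnder.of_frequently_ge ((hfreq t ht).mono fun _ hx => hx.ge)
  · exact le_limsup_of_frequently_le ((hfreq s hs).mono fun _ hx => hx.ge)
      (isBoundedUnder_of_eventually_le hle)

section MulPeriodicReal

variable {g : ℝ → ℝ} {r : ℝ}

theorem isBoundedUnder_le_of_mul_periodic (hg : ∀ x > 0, g (x * r) = g x) (hr : 1 < r)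
    (hbdd : BddAbove (g '' Icc 1 r)) : IsBoundedUnder (· ≤ ·) atTop g :=
  isBoundedUnder_of_eventually_le ((eventually_ge_atTop 1).mono fun _ hx =>
    le_csSup hbdd (mul_periodic_mem_image_Icc hg hr hx))

theorem limsup_of_mul_periodic (hg : ∀ x > 0, g (x * r) = g x) (hr : 1 < r)
    (hbdd : BddAbove (g '' Icc 1 r)) : limsup g atTop = sSup (g '' Icc 1 r) := by
  refine limsup_eq_csSup_of_frequently_eq ⟨g 1, 1, ⟨le_rfl, hr.le⟩, rfl⟩ hbdd
    ((eventually_ge_atTop 1).mono fun _ hx => mul_periodic_mem_image_Icc hg hr hx) ?_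
  rintro _ ⟨y, hy, rfl⟩
  exact mul_periodic_frequently_eq hg hr (one_pos.trans_le hy.1)

end MulPeriodicReal

theorem limsup_mul_of_tendsto_of_pos {ι : Type*} {f : Filter ι} [f.NeBot] {u v : ι → ℝ}
    {A : ℝ} (hu : Tendsto u f (𝓝 A)) (hA : 0 < A) (hv₀ : 0 ≤ᶠ[f] v)
    (hv : IsBoundedUnder (· ≤ ·) f v) : limsup (u * v) f = A * limsup v f := by
  have hu₀ : 0 ≤ᶠ[f] u := (hu.eventually (eventually_gt_nhds hA)).mono fun _ hx => hx.le
  apply le_antisymm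
  · simpa only [hu.limsup_eq] using
      limsup_mul_le hu₀.frequently hu.isBoundedUnder_le hv₀ hv
  · simpa only [hu.liminf_eq, mul_comm] using
      le_limsup_mul hv₀.frequently hv hu₀ hu.isBoundedUnder_le

namespace MemP

variable {r : ℝ} {p : ℝ → ℝ} {lam : ℝ}

theorem ratio_mul_periodic (hp : MemP r p) (hlam : 0 < lam) :
    ∀ x > 0, p (lam * (x * r)) / p (x * r) = p (lam * x) / p x := fun x hx => by
  rw [← mul_assoc, hp.2.2.2.2 _ (mul_pos hlam hx), hp.2.2.2.2 _ hx]

theorem ratio_pos (hp : MemP r p) (hlam : 0 < lam) {x : ℝ} (hx : 0 < x) :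
    0 < p (lam * x) / p x :=
  div_pos (hp.1 _ (mul_pos hlam hx)) (hp.1 x hx)

theorem bddAbove_ratio_image_Icc (hp : MemP r p) (hlam : 0 < lam) :
    BddAbove ((fun x => p (lam * x) / p x) '' Icc 1 r) := by
  obtain ⟨hpos, ⟨M, hM⟩, -, ⟨c, hc₀, hc⟩, -⟩ := hp
  refine ⟨M / c, ?_⟩
  rintro _ ⟨y, hy, rfl⟩
  have hy₀ : 0 < y := one_pos.trans_le hy.1
  exact div_le_div₀ ((hpos 1 one_pos).le.trans (hM 1 one_pos)) (hM _ (mul_pos hlam hy₀)) hc₀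
    (hc y hy)

end MemP

theorem ratio_eq_of_eq_rpow_mul_mul {f l p : ℝ → ℝ} {ρ lam : ℝ} (hlam : 0 < lam)
    (hf : ∀ x > (0:ℝ), f x = x ^ ρ * l x * p x) {x : ℝ} (hx : 0 < x) :
    f (lam * x) / f x = lam ^ ρ * (l (lam * x) / l x) * (p (lam * x) / p x) := by
  rw [hf _ (mul_pos hlam hx), hf _ hx, mul_rpow hlam.le hx.le, mul_div_mul_comm,
    mul_div_mul_comm, mul_div_cancel_right₀ _ (rpow_pos_of_pos hx ρ).ne']

theorem statement_3 (f p : ℝ → ℝ) (r ρ : ℝ) (l : ℝ → ℝ)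
    (hr : 1 < r) (hl : SlowlyVarying l) (hp : MemP r p)
    (hf : ∀ x > (0:ℝ), f x = x ^ ρ * l x * p x) :
    ∀ lam > (0:ℝ),
      Filter.limsup (fun x : ℝ => f (lam * x) / f x) Filter.atTop =
        lam ^ ρ * sSup ((fun x : ℝ => p (lam * x) / p x) '' Set.Icc 1 r) := by
  intro lam hlam
  set g : ℝ → ℝ := fun x => p (lam * x) / p x
  have hg_per : ∀ x > 0, g (x * r) = g x := hp.ratio_mul_periodic hlam
  have hg_bdd : BddAbove (g '' Icc 1 r) := hp.bddAbove_ratio_image_Icc hlam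
  have hg₀ : 0 ≤ᶠ[atTop] g :=
    (eventually_gt_atTop 0).mono fun _ hx => (hp.ratio_pos hlam hx).le
  have hratio : (fun x => f (lam * x) / f x)
      =ᶠ[atTop] (fun x => lam ^ ρ * (l (lam * x) / l x)) * g :=
    (eventually_gt_atTop 0).mono fun _ hx => ratio_eq_of_eq_rpow_mul_mul hlam hf hx
  have hslow : Tendsto (fun x => lam ^ ρ * (l (lam * x) / l x)) atTop (𝓝 (lam ^ ρ)) := by
    simpa using (hl.2 lam hlam).const_mul (lam ^ ρ)
  rw [limsup_congr hratio,
    limsup_mul_of_tendsto_of_pos hslow (rpow_pos_of_pos hlam ρ) hg₀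
      (isBoundedUnder_le_of_mul_periodic hg_per hr hg_bdd),
    limsup_of_mul_periodic hg_per hr hg_bdd]
end

section
/- Let f(x) = x^ρ ℓ(x) p(x) with ℓ slowly varying at infinity, ρ ∈ ℝ, r > 1, and p ∈ P_r (positive, bounded, right-continuous, inf on [1,r] positive, log-periodic with period r). Then the function f^*(λ) = limsup_{x→∞} f(λx)/f(x) is continuous at λ = 1 if and only if p is continuous on (0,∞). -/
/-!
For `λ > 0` and large `x`, `f(λx)/f(x) = λ^ρ · ℓ(λx)/ℓ(x) · p(λx)/p(x)`. The middle factor tends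
to `1`, and by log-periodicity the last one takes each of its values along a sequence `y rⁿ → ∞`,
so `f^*(λ) = λ^ρ S(λ)` with `S(λ) = sup_{x>0} p(λx)/p(x)` and `S(1) = 1`. If `p` is continuous,
`p ∘ exp` is continuous and periodic, hence uniformly continuous, which gives `S(λ) → 1`.
Conversely, `p x₀ / S(x₀/y) ≤ p y ≤ p x₀ · S(y/x₀)` squeezes `p y` to `p x₀` as `y → x₀`.
-/

open Filter Set Real

open Topology

theorem Function.Periodic.uniformContinuous_of_continuous {α : Type*} [PseudoMetricSpace α]
    {f : ℝ → α} {c : ℝ} (hf : Function.Periodic f c) (hc : 0 < c) (hcont : Continuous f) :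
    UniformContinuous f := by
  have hK := (isCompact_Icc (a := -c) (b := 2 * c)).uniformContinuousOn_of_continuous
    hcont.continuousOn
  rw [Metric.uniformContinuousOn_iff] at hK
  rw [Metric.uniformContinuous_iff]
  intro ε hε
  obtain ⟨δ, hδ, hfδ⟩ := hK ε hε
  refine ⟨min δ c, lt_min hδ hc, fun {a b} hab => ?_⟩
  -- translate `a` into `[0, c)`; then `b` lands in `[-c, 2c]`
  obtain ⟨n, ⟨ha₀, hac⟩, -⟩ := existsUnique_zsmul_near_of_pos' hc a
  have hb : |b - a| < c := by
    rw [← Real.dist_eq, dist_comm]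
    exact hab.trans_le (min_le_right _ _)
  rw [abs_lt] at hb
  rw [← hf.sub_zsmul_eq n, ← hf.sub_zsmul_eq (x := b) n]
  refine hfδ _ ⟨by linarith, by linarith⟩ _ ⟨by linarith, by linarith⟩ ?_
  rw [dist_sub_right]
  exact hab.trans_le (min_le_left _ _)

theorem continuousAt_mul_iff_right {α 𝕜 : Type*} [TopologicalSpace α] [Field 𝕜]
    [TopologicalSpace 𝕜] [T1Space 𝕜] [ContinuousMul 𝕜] [ContinuousInv₀ 𝕜] {g h : α → 𝕜} {a : α}
    (hg : ContinuousAt g a) (hga : g a ≠ 0) :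
    ContinuousAt (fun x => g x * h x) a ↔ ContinuousAt h a :=
  ⟨fun hgh => (hgh.div hg hga).congr <|
      (hg.eventually_ne hga).mono fun _ hx => mul_div_cancel_left₀ _ hx,
    hg.mul⟩

noncomputable def ratioSup (p : ℝ → ℝ) (lam : ℝ) : ℝ :=
  ⨆ x : Ioi (0:ℝ), p (lam * x) / p x

theorem ratioSup_le {p : ℝ → ℝ} {lam K : ℝ} (hK : ∀ x > 0, p (lam * x) / p x ≤ K) :
    ratioSup p lam ≤ K :=
  ciSup_le fun x => hK x x.2

theorem ratioSup_one {p : ℝ → ℝ} (hp : ∀ x > 0, 0 < p x) : ratioSup p 1 = 1 := by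
  have : (fun x : Ioi (0:ℝ) => p (1 * x) / p x) = fun _ => 1 := by
    ext x; rw [one_mul, div_self (hp x x.2).ne']
  rw [ratioSup, this, ciSup_const]

namespace MemP

variable {r : ℝ} {p : ℝ → ℝ}

theorem pos (hp : MemP r p) {x : ℝ} (hx : 0 < x) : 0 < p x := hp.1 x hx

theorem periodic_comp_exp (hp : MemP r p) (hr : 0 < r) : Function.Periodic (p ∘ exp) (log r) :=
  fun t => by simp only [Function.comp, exp_add, exp_log hr, hp.2.2.2.2 _ (exp_pos t)]

theorem apply_mul_pow (hp : MemP r p) (hr : 0 < r) {x : ℝ} (hx : 0 < x) (n : ℕ) :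
    p (x * r ^ n) = p x := by
  induction n with
  | zero => simp
  | succ n ih => rw [pow_succ, ← mul_assoc, hp.2.2.2.2 _ (by positivity), ih]

theorem exists_pos_le (hp : MemP r p) (hr : 1 < r) : ∃ c > 0, ∀ x > 0, c ≤ p x := by
  obtain ⟨c, hc, hcp⟩ := hp.2.2.2.1
  refine ⟨c, hc, fun x hx => ?_⟩
  obtain ⟨t, ⟨ht₀, htr⟩, hpt⟩ :=
    (hp.periodic_comp_exp (by linarith)).exists_mem_Ico₀ (log_pos hr) (log x)
  rw [Function.comp_apply, exp_log hx] at hpt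
  rw [hpt]
  exact hcp _ ⟨one_le_exp ht₀, ((exp_lt_exp.2 htr).trans_eq (exp_log (by linarith))).le⟩

theorem eventually_forall_abs_sub_lt (hp : MemP r p) (hr : 1 < r)
    (hcont : ContinuousOn p (Ioi 0)) {ε : ℝ} (hε : 0 < ε) :
    ∀ᶠ lam in 𝓝 1, ∀ x > 0, |p (lam * x) - p x| < ε := by
  have hu := (hp.periodic_comp_exp (by linarith)).uniformContinuous_of_continuous (log_pos hr)
    (hcont.comp_continuous continuous_exp exp_pos)
  obtain ⟨δ, hδ, hpδ⟩ := Metric.uniformContinuous_iff.1 hu ε hε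
  have hlog : Tendsto log (𝓝 1) (𝓝 0) := by
    simpa using (continuousAt_log one_ne_zero).tendsto
  filter_upwards [eventually_gt_nhds one_pos, hlog.eventually (Metric.ball_mem_nhds 0 hδ)]
    with lam hlam hlog x hx
  have := hpδ (a := log lam + log x) (b := log x) (by simpa [Real.dist_eq] using hlog)
  rwa [Function.comp_apply, Function.comp_apply, exp_add, exp_log hlam, exp_log hx,
    Real.dist_eq] at this

theorem ratio_le_ratioSup (hp : MemP r p) (hr : 1 < r) {lam x : ℝ} (hlam : 0 < lam)
    (hx : 0 < x) : p (lam * x) / p x ≤ ratioSup p lam := by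
  obtain ⟨M, hM⟩ := hp.2.1
  obtain ⟨c, hc, hcp⟩ := hp.exists_pos_le hr
  refine le_ciSup (f := fun y : Ioi (0:ℝ) => p (lam * y) / p y) ⟨M / c, ?_⟩ ⟨x, hx⟩
  rintro _ ⟨y, rfl⟩
  exact div_le_div₀ ((hp.pos hx).le.trans (hM x hx)) (hM _ (mul_pos hlam y.2)) hc (hcp y y.2)

theorem continuousAt_ratioSup (hp : MemP r p) (hr : 1 < r) (hcont : ContinuousOn p (Ioi 0)) :
    ContinuousAt (ratioSup p) 1 := by
  obtain ⟨c, hc, hcp⟩ := hp.exists_pos_le hr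
  rw [ContinuousAt, ratioSup_one hp.1, Metric.tendsto_nhds]
  intro ε hε
  filter_upwards [eventually_gt_nhds one_pos,
    hp.eventually_forall_abs_sub_lt hr hcont (mul_pos hc (half_pos hε))] with lam hlam hclose
  -- `|p(λx)/p(x) - 1| = |p(λx) - p(x)| / p(x)` and `p(x) ≥ c`
  have hratio : ∀ x > 0, |p (lam * x) / p x - 1| < ε / 2 := fun x hx => by
    rw [div_sub_one (hp.pos hx).ne', abs_div, abs_of_pos (hp.pos hx),
      div_lt_iff₀ (hp.pos hx)]
    nlinarith [hclose x hx, hcp x hx]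
  have hupper : ratioSup p lam ≤ 1 + ε / 2 :=
    ratioSup_le fun x hx => by linarith [(abs_lt.1 (hratio x hx)).2]
  have hlower := hp.ratio_le_ratioSup hr hlam one_pos
  rw [Real.dist_eq, abs_lt]
  constructor <;> linarith [(abs_lt.1 (hratio 1 one_pos)).1]

theorem continuousOn_of_continuousAt_ratioSup (hp : MemP r p) (hr : 1 < r)
    (h : ContinuousAt (ratioSup p) 1) : ContinuousOn p (Ioi 0) := by
  intro x₀ hx₀
  refine ContinuousAt.continuousWithinAt ?_
  have hS : ∀ g : ℝ → ℝ, ContinuousAt g x₀ → g x₀ = 1 →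
      Tendsto (fun y => ratioSup p (g y)) (𝓝 x₀) (𝓝 1) := fun g hg hg₁ => by
    have := h.tendsto.comp (hg₁ ▸ hg.tendsto)
    rwa [ratioSup_one hp.1] at this
  have hup := hS (· / x₀) (continuousAt_id.div_const x₀) (div_self (ne_of_gt hx₀))
  have hdown := hS (x₀ / ·) (continuousAt_const.div continuousAt_id (ne_of_gt hx₀))
    (div_self (ne_of_gt hx₀))
  have hlow : Tendsto (fun y => p x₀ / ratioSup p (x₀ / y)) (𝓝 x₀) (𝓝 (p x₀)) := by
    have := (tendsto_const_nhds (x := p x₀)).div hdown one_ne_zero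
    rwa [div_one] at this
  have hhigh : Tendsto (fun y => p x₀ * ratioSup p (y / x₀)) (𝓝 x₀) (𝓝 (p x₀)) := by
    have := (tendsto_const_nhds (x := p x₀)).mul hup
    rwa [mul_one] at this
  refine tendsto_of_tendsto_of_tendsto_of_le_of_le' hlow hhigh ?_ ?_ <;>
    filter_upwards [eventually_gt_nhds hx₀] with y hy
  · have hle := hp.ratio_le_ratioSup hr (div_pos hx₀ hy) hy
    rw [div_mul_cancel₀ _ hy.ne'] at hle
    rw [div_le_iff₀ ((div_pos (hp.pos hx₀) (hp.pos hy)).trans_le hle)]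
    rwa [div_le_iff₀ (hp.pos hy), mul_comm] at hle
  · have hle := hp.ratio_le_ratioSup hr (div_pos hy hx₀) hx₀
    rwa [div_mul_cancel₀ _ hx₀.ne', div_le_iff₀ (hp.pos hx₀), mul_comm] at hle

end MemP

theorem ratio_eventuallyEq {f p l : ℝ → ℝ} {ρ lam : ℝ} (hlam : 0 < lam)
    (hl : ∀ᶠ x in atTop, l x ≠ 0) (hp : ∀ x > 0, p x ≠ 0)
    (hf : ∀ x > 0, f x = x ^ ρ * l x * p x) :
    (fun x => f (lam * x) / f x) =ᶠ[atTop]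
      fun x => lam ^ ρ * (l (lam * x) / l x) * (p (lam * x) / p x) := by
  filter_upwards [hl, eventually_gt_atTop 0] with x hlx hx
  rw [hf _ (mul_pos hlam hx), hf x hx, mul_rpow hlam.le hx.le]
  have := (rpow_pos_of_pos hx ρ).ne'
  field_simp [hp x hx]

theorem limsup_ratio_eq_rpow_mul_ratioSup {f p l : ℝ → ℝ} {r ρ lam : ℝ} (hr : 1 < r)
    (hl : SlowlyVarying l) (hp : MemP r p) (hf : ∀ x > 0, f x = x ^ ρ * l x * p x)
    (hlam : 0 < lam) :
    limsup (fun x => f (lam * x) / f x) atTop = lam ^ ρ * ratioSup p lam := by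
  set g : ℝ → ℝ := fun x => lam ^ ρ * (l (lam * x) / l x)
  have hg : Tendsto g atTop (𝓝 (lam ^ ρ)) := by
    simpa using (hl.2 lam hlam).const_mul (lam ^ ρ)
  have hg_pos : ∀ᶠ x in atTop, 0 < g x := hg.eventually_const_lt (rpow_pos_of_pos hlam ρ)
  rw [limsup_congr (ratio_eventuallyEq hlam (hl.1.mono fun _ h => h.ne')
    (fun x hx => (hp.pos hx).ne') hf)]
  have hle : ∀ᶠ x in atTop, g x * (p (lam * x) / p x) ≤ g x * ratioSup p lam :=
    (hg_pos.and (eventually_gt_atTop 0)).mono fun x hx =>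
      mul_le_mul_of_nonneg_left (hp.ratio_le_ratioSup hr hlam hx.2) hx.1.le
  have hgS : Tendsto (fun x => g x * ratioSup p lam) atTop (𝓝 (lam ^ ρ * ratioSup p lam)) :=
    hg.mul_const _
  have hbdd : IsBoundedUnder (· ≤ ·) atTop fun x => g x * (p (lam * x) / p x) :=
    hgS.isBoundedUnder_le.mono_le hle
  apply le_antisymm
  · have hnonneg : ∀ᶠ x in atTop, 0 ≤ g x * (p (lam * x) / p x) :=
      (hg_pos.and (eventually_gt_atTop 0)).mono fun x hx =>
        mul_nonneg hx.1.le (div_pos (hp.pos (mul_pos hlam hx.2)) (hp.pos hx.2)).le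
    calc _ ≤ limsup (fun x => g x * ratioSup p lam) atTop :=
          limsup_le_limsup hle (isCoboundedUnder_le_of_eventually_le atTop hnonneg)
            hgS.isBoundedUnder_le
      _ = _ := hgS.limsup_eq
  · -- along `y rⁿ` the factor `p(λx)/p(x)` is frozen at its value at `y`
    rw [← le_div_iff₀' (rpow_pos_of_pos hlam ρ)]
    refine ratioSup_le fun y hy => ?_
    rw [le_div_iff₀' (rpow_pos_of_pos hlam ρ)]
    have hv : Tendsto (fun n : ℕ => y * r ^ n) atTop atTop :=
      (tendsto_pow_atTop_atTop_of_one_lt hr).const_mul_atTop hy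
    have hfrozen : ∀ n : ℕ, p (lam * (y * r ^ n)) / p (y * r ^ n) = p (lam * y) / p y :=
      fun n => by
        rw [← mul_assoc, hp.apply_mul_pow (by linarith) (mul_pos hlam hy),
          hp.apply_mul_pow (by linarith) hy]
    have hcomp : Tendsto ((fun x => g x * (p (lam * x) / p x)) ∘ fun n : ℕ => y * r ^ n) atTop
        (𝓝 (lam ^ ρ * (p (lam * y) / p y))) := by
      simpa only [Function.comp_def, hfrozen] using (hg.comp hv).mul_const (p (lam * y) / p y)
    calc _ = limsup ((fun x => g x * (p (lam * x) / p x)) ∘ fun n : ℕ => y * r ^ n) atTop :=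
          hcomp.limsup_eq.symm
      _ ≤ _ := hv.limsup_comp_le_limsup hcomp.isCoboundedUnder_le hbdd

theorem statement_4 (f p : ℝ → ℝ) (r ρ : ℝ) (l : ℝ → ℝ)
    (hr : 1 < r) (hl : SlowlyVarying l) (hp : MemP r p)
    (hf : ∀ x > (0:ℝ), f x = x ^ ρ * l x * p x) :
    ContinuousAt
        (fun lam : ℝ => Filter.limsup (fun x : ℝ => f (lam * x) / f x) Filter.atTop)
        1 ↔
      ContinuousOn p (Set.Ioi 0) := by
  have hF : (fun lam : ℝ => limsup (fun x : ℝ => f (lam * x) / f x) atTop) =ᶠ[𝓝 1]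
      fun lam => lam ^ ρ * ratioSup p lam :=
    (eventually_gt_nhds one_pos).mono fun _ hlam =>
      limsup_ratio_eq_rpow_mul_ratioSup hr hl hp hf hlam
  rw [continuousAt_congr hF, continuousAt_mul_iff_right
    (continuousAt_rpow_const 1 ρ (Or.inl one_ne_zero)) (by simp)]
  exact ⟨hp.continuousOn_of_continuousAt_ratioSup hr, hp.continuousAt_ratioSup hr⟩
end

section
/- Let f(x) = x^ρ ℓ(x) p(x) with ℓ slowly varying at infinity, ρ ∈ ℝ, r > 1, p ∈ P_r. Then f is regularly varying at infinity (f(λx)/f(x) → λ^ρ for all λ > 0) if and only if p is constant. -/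
open Filter Set Real

theorem statement_6 (f p : ℝ → ℝ) (r ρ : ℝ) (l : ℝ → ℝ)
    (hr : 1 < r) (hl : SlowlyVarying l) (hp : MemP r p)
    (hf : ∀ x > (0:ℝ), f x = x ^ ρ * l x * p x) :
    (∀ lam > (0:ℝ),
        Filter.Tendsto (fun x : ℝ => f (lam * x) / f x) Filter.atTop
          (nhds (lam ^ ρ))) ↔
      ∃ c : ℝ, ∀ x > (0:ℝ), p x = c := by

  obtain ⟨hpos, _hbd, _hrc, _hc, hper⟩ := hp
  obtain ⟨hlpos, hlsv⟩ := hl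
  have hr0 : (0:ℝ) < r := lt_trans one_pos hr
  have hperiod : ∀ x > (0:ℝ), ∀ n : ℕ, p (x * r^n) = p x := by
    intro x hx n
    induction n with
    | zero => simp
    | succ n ih =>
      have hx' : 0 < x * r^n := by positivity
      have : x * r^(n+1) = x * r^n * r := by ring
      rw [this, hper _ hx', ih]
  constructor
  · intro h
    have key : ∀ lam > (0:ℝ), ∀ y > (0:ℝ), p (lam * y) = p y := by
      intro lam hlam y hy
      have hatop : Tendsto (fun n : ℕ => y * r^n) atTop atTop :=
        (tendsto_pow_atTop_atTop_of_one_lt hr).const_mul_atTop hy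
      have hatop2 : Tendsto (fun n : ℕ => lam * (y * r^n)) atTop atTop :=
        hatop.const_mul_atTop hlam
      have h1 : Tendsto (fun n : ℕ => f (lam * (y * r^n)) / f (y * r^n)) atTop
          (nhds (lam ^ ρ)) := (h lam hlam).comp hatop
      have hev : ∀ᶠ n : ℕ in atTop,
          f (lam * (y * r^n)) / f (y * r^n)
            = lam ^ ρ * (l (lam * (y * r^n)) / l (y * r^n)) * (p (lam * y) / p y) := by
        filter_upwards [hatop.eventually hlpos, hatop2.eventually hlpos] with n hl1 hl2
        have ha : (0:ℝ) < y * r^n := by positivity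
        have ha2 : (0:ℝ) < lam * (y * r^n) := by positivity
        rw [hf _ ha, hf _ ha2, hperiod y hy n]
        have hpl : p (lam * (y * r^n)) = p (lam * y) := by
          have := hperiod (lam * y) (by positivity) n
          rw [← this]; ring_nf
        rw [hpl, Real.mul_rpow hlam.le ha.le]
        have hrp : (0:ℝ) < (y * r^n) ^ ρ := Real.rpow_pos_of_pos ha ρ
        field_simp [hrp.ne', hl1.ne', hl2.ne', (hpos y hy).ne']
      have h2 : Tendsto (fun n : ℕ =>
          lam ^ ρ * (l (lam * (y * r^n)) / l (y * r^n)) * (p (lam * y) / p y)) atTop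
          (nhds (lam ^ ρ * 1 * (p (lam * y) / p y))) := by
        exact (((hlsv lam hlam).comp hatop).const_mul _).mul_const _
      have h3 := tendsto_nhds_unique (h1.congr' hev) h2
      have hlr : (0:ℝ) < lam ^ ρ := Real.rpow_pos_of_pos hlam ρ
      have hpy : (0:ℝ) < p y := hpos y hy
      rw [mul_one] at h3
      have hd : p (lam * y) / p y = 1 :=
        mul_left_cancel₀ hlr.ne' (by rw [mul_one]; exact h3.symm)
      field_simp at hd
      exact hd
    refine ⟨p 1, fun x hx => ?_⟩
    have := key x hx 1 one_pos
    simpa using this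
  · rintro ⟨c, hcc⟩ lam hlam
    have hc0 : 0 < c := by rw [← hcc 1 one_pos]; exact hpos 1 one_pos
    have hev : ∀ᶠ x : ℝ in atTop,
        f (lam * x) / f x = lam ^ ρ * (l (lam * x) / l x) := by
      filter_upwards [eventually_gt_atTop 0, hlpos,
        (tendsto_id.const_mul_atTop hlam).eventually hlpos] with x hx hl1 hl2
      have hlx : (0:ℝ) < lam * x := by positivity
      rw [hf _ hlx, hf _ hx, hcc _ hlx, hcc _ hx, Real.mul_rpow hlam.le hx.le]
      have hrp : (0:ℝ) < x ^ ρ := Real.rpow_pos_of_pos hx ρ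
      field_simp
    have : Tendsto (fun x : ℝ => lam ^ ρ * (l (lam * x) / l x)) atTop
        (nhds (lam ^ ρ * 1)) := (hlsv lam hlam).const_mul _
    rw [mul_one] at this
    exact this.congr' (hev.mono fun x hx => hx.symm)
end

section
/- Let q ∈ Q_{r,ρ} with ρ > 0, r > 1, so that s^{−ρ} q(s) = ∫_0^∞ e^{−sx} dg(x) for a nondecreasing right-continuous g with g(0) = 0. Then g(x) = r^ρ g(x/r) for all x > 0, i.e. p(x) := x^{−ρ} g(x) satisfies p(xr) = p(x) for all x > 0. -/
open Filter Set Real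

/-- `q ∈ Q_{r,ρ}`: `q` positive, log-periodic with period `r`, and `s ↦ s^{-ρ} q(s)`
is completely monotone on `(0,∞)`. -/
def MemQ (r ρ : ℝ) (q : ℝ → ℝ) : Prop :=
  (∀ s > (0:ℝ), 0 < q s) ∧
  (∀ s > (0:ℝ), q (s * r) = q s) ∧
  ContDiffOn ℝ (⊤ : ℕ∞) (fun s : ℝ => s ^ (-ρ) * q s) (Set.Ioi 0) ∧
  ∀ (n : ℕ), ∀ s > (0:ℝ),
    0 ≤ (-1:ℝ)^n * iteratedDeriv n (fun s : ℝ => s ^ (-ρ) * q s) s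

/-- `q = A_ρ p`: there is a (necessarily unique) Stieltjes function `G` agreeing with
`x ↦ x^ρ p(x)` on `(0,∞)` and vanishing on `(-∞,0]`, such that
`q(s) = s^ρ ∫₀^∞ e^{-sx} dG(x)` for all `s > 0`. -/
def TransformRel (ρ : ℝ) (p q : ℝ → ℝ) : Prop :=
  ∃ G : StieltjesFunction ℝ,
    (∀ x > (0:ℝ), G x = x ^ ρ * p x) ∧
    (∀ x ≤ (0:ℝ), G x = 0) ∧
    ∀ s > (0:ℝ),
      q s = s ^ ρ * ∫ x in Set.Ioi (0:ℝ), Real.exp (-(s * x)) ∂G.measure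

open MeasureTheory ENNReal BoundedContinuousFunction
open scoped NNReal BoundedContinuousFunction

lemma laplace_ext (μ ν : Measure ℝ) (hμ0 : μ (Set.Iic 0) = 0) (hν0 : ν (Set.Iic 0) = 0)
    (hfin : ∫⁻ x, ENNReal.ofReal (Real.exp (-(1 * x))) ∂μ ≠ ⊤)
    (h : ∀ s > (0:ℝ), ∫⁻ x, ENNReal.ofReal (Real.exp (-(s * x))) ∂μ
        = ∫⁻ x, ENNReal.ofReal (Real.exp (-(s * x))) ∂ν) : μ = ν := by
  classical
  set w1 : ℝ → ℝ≥0∞ := fun x => ENNReal.ofReal (Real.exp (-x)) with hw1def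
  have hw1 : Measurable w1 := (Real.measurable_exp.comp measurable_neg).ennreal_ofReal
  have hws : ∀ s : ℝ, Measurable fun x => ENNReal.ofReal (Real.exp (-(s * x))) := fun s =>
    (Real.measurable_exp.comp (measurable_const_mul s).neg).ennreal_ofReal
  set μ' : Measure ℝ := μ.withDensity w1 with hμ'def
  set ν' : Measure ℝ := ν.withDensity w1 with hν'def
  have hw1eq : (fun x => ENNReal.ofReal (Real.exp (-(1 * x)))) = w1 := by
    funext x; simp [hw1def]
  have hmass : ∀ m : Measure ℝ, (m.withDensity w1) Set.univ
      = ∫⁻ x, ENNReal.ofReal (Real.exp (-(1 * x))) ∂m := by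
    intro m
    rw [withDensity_apply _ MeasurableSet.univ, setLIntegral_univ]
    exact lintegral_congr fun x => by simp [hw1def]
  haveI hμ'fin : IsFiniteMeasure μ' := by
    constructor
    rw [hμ'def, hmass μ]
    exact hfin.lt_top
  haveI hν'fin : IsFiniteMeasure ν' := by
    constructor
    rw [hν'def, hmass ν, ← h 1 one_pos]
    exact hfin.lt_top
  -- moments equality on the weighted measures
  have hmom : ∀ s : ℝ, 0 ≤ s →
      ∫⁻ x, ENNReal.ofReal (Real.exp (-(s * x))) ∂μ'
        = ∫⁻ x, ENNReal.ofReal (Real.exp (-(s * x))) ∂ν' := by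
    intro s hs
    rw [hμ'def, hν'def, lintegral_withDensity_eq_lintegral_mul _ hw1 (hws s),
      lintegral_withDensity_eq_lintegral_mul _ hw1 (hws s)]
    have : (w1 * fun x => ENNReal.ofReal (Real.exp (-(s * x))))
        = fun x => ENNReal.ofReal (Real.exp (-((s + 1) * x))) := by
      funext x
      simp only [Pi.mul_apply, hw1def]
      rw [← ENNReal.ofReal_mul (Real.exp_nonneg _), ← Real.exp_add]
      ring_nf
    rw [this]
    exact h (s + 1) (by linarith)
  set φ : ℝ → ℝ := fun x => Real.exp (-x) with hφdef
  have hφ : Measurable φ := Real.measurable_exp.comp measurable_neg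
  have hφi : Function.Injective φ := fun a b hab => by
    have := Real.exp_injective hab
    linarith
  set μ'' : Measure ℝ := Measure.map φ μ' with hμ''def
  set ν'' : Measure ℝ := Measure.map φ ν' with hν''def
  haveI : IsFiniteMeasure μ'' := by
    constructor; rw [hμ''def, Measure.map_apply hφ MeasurableSet.univ]
    exact measure_lt_top _ _
  haveI : IsFiniteMeasure ν'' := by
    constructor; rw [hν''def, Measure.map_apply hφ MeasurableSet.univ]
    exact measure_lt_top _ _
  have hsupp : ∀ (m : Measure ℝ), m (Set.Iic 0) = 0 →
      ∀ᵐ t ∂(Measure.map φ (m.withDensity w1)), t ∈ Set.Ioo (0:ℝ) 1 := by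
    intro m hm
    refine (MeasureTheory.ae_map_iff hφ.aemeasurable measurableSet_Ioo).mpr ?_
    have hnull : (m.withDensity w1) (Set.Iic 0) = 0 := by
      rw [withDensity_apply _ measurableSet_Iic, setLIntegral_measure_zero _ _ hm]
    rw [ae_iff]
    refine measure_mono_null ?_ hnull
    intro x hx
    simp only [Set.mem_setOf_eq, Set.mem_Ioo, hφdef] at hx
    push_neg at hx
    have : (1:ℝ) ≤ Real.exp (-x) := hx (Real.exp_pos _)
    rw [Real.one_le_exp_iff] at this
    simpa using by linarith
  have hμ''s := hsupp μ hμ0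
  have hν''s := hsupp ν hν0
  rw [← hμ'def, ← hμ''def] at hμ''s
  rw [← hν'def, ← hν''def] at hν''s
  -- moments of the pushed-forward measures
  have hM : ∀ n : ℕ, ∫⁻ t, ENNReal.ofReal (t ^ n) ∂μ'' = ∫⁻ t, ENNReal.ofReal (t ^ n) ∂ν'' := by
    intro n
    have hmeas : Measurable fun t : ℝ => ENNReal.ofReal (t ^ n) :=
      (measurable_id.pow_const n).ennreal_ofReal
    rw [hμ''def, hν''def, lintegral_map hmeas hφ, lintegral_map hmeas hφ]
    have : (fun x => ENNReal.ofReal (φ x ^ n))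
        = fun x => ENNReal.ofReal (Real.exp (-((n:ℝ) * x))) := by
      funext x
      rw [hφdef]
      congr 1
      rw [← Real.exp_nat_mul]
      ring_nf
    rw [this]
    exact hmom n (Nat.cast_nonneg n)
  -- integrability of monomials
  have hint : ∀ (m : Measure ℝ) [IsFiniteMeasure m], (∀ᵐ t ∂m, t ∈ Set.Ioo (0:ℝ) 1) →
      ∀ n : ℕ, Integrable (fun t : ℝ => t ^ n) m := by
    intro m _ hm n
    refine Integrable.mono' (integrable_const (1:ℝ))
      (measurable_id.pow_const n).aestronglyMeasurable ?_
    filter_upwards [hm] with t ht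
    rw [Real.norm_eq_abs, abs_of_nonneg (pow_nonneg ht.1.le n)]
    exact pow_le_one₀ ht.1.le ht.2.le
  -- real moments agree
  have hIn : ∀ n : ℕ, ∫ t, t ^ n ∂μ'' = ∫ t, t ^ n ∂ν'' := by
    intro n
    rw [integral_eq_lintegral_of_nonneg_ae (hμ''s.mono fun t ht => pow_nonneg ht.1.le n)
        (measurable_id.pow_const n).aestronglyMeasurable,
      integral_eq_lintegral_of_nonneg_ae (hν''s.mono fun t ht => pow_nonneg ht.1.le n)
        (measurable_id.pow_const n).aestronglyMeasurable, hM n]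
  -- polynomial integrals agree
  have hP : ∀ p : Polynomial ℝ, ∫ t, p.eval t ∂μ'' = ∫ t, p.eval t ∂ν'' := by
    intro p
    have hev : ∀ t : ℝ, p.eval t = ∑ i ∈ Finset.range (p.natDegree + 1), p.coeff i * t ^ i := by
      intro t; rw [Polynomial.eval_eq_sum_range]
    simp_rw [hev]
    rw [integral_finset_sum _ (fun i _ => (hint μ'' hμ''s i).const_mul _),
      integral_finset_sum _ (fun i _ => (hint ν'' hν''s i).const_mul _)]
    refine Finset.sum_congr rfl fun i _ => ?_
    rw [integral_const_mul, integral_const_mul, hIn i]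
  have hFint : ∀ (f : ℝ →ᵇ ℝ≥0) (m : Measure ℝ) [IsFiniteMeasure m],
      Integrable (fun t => (f t : ℝ)) m := by
    intro f m _
    obtain ⟨C, hC⟩ := f.bounded
    refine Integrable.mono' (integrable_const (C + ((f 0 : ℝ≥0) : ℝ)))
      (NNReal.continuous_coe.comp f.continuous).aestronglyMeasurable ?_
    filter_upwards with t
    rw [Real.norm_eq_abs, abs_of_nonneg (f t).coe_nonneg]
    have h1 := hC t 0
    rw [NNReal.dist_eq] at h1
    linarith [(abs_le.mp h1).2]
  -- bounded continuous functions
  have hbc : ∀ f : ℝ →ᵇ ℝ≥0, ∫ t, (f t : ℝ) ∂μ'' = ∫ t, (f t : ℝ) ∂ν'' := by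
    intro f
    set F : ℝ → ℝ := fun t => (f t : ℝ) with hFdef
    have hFc : Continuous F := NNReal.continuous_coe.comp f.continuous
    have hFi : ∀ (m : Measure ℝ) [IsFiniteMeasure m], Integrable F m := fun m _ => hFint f m
    have hPint : ∀ (m : Measure ℝ) [IsFiniteMeasure m], (∀ᵐ t ∂m, t ∈ Set.Ioo (0:ℝ) 1) →
        ∀ p : Polynomial ℝ, Integrable (fun t => p.eval t) m := by
      intro m _ hm p
      have hev : ∀ t : ℝ, p.eval t = ∑ i ∈ Finset.range (p.natDegree + 1), p.coeff i * t ^ i := by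
        intro t; rw [Polynomial.eval_eq_sum_range]
      simp_rw [hev]
      exact integrable_finset_sum _ (fun i _ => (hint m hm i).const_mul _)
    have key : ∀ ε > (0:ℝ), |∫ t, F t ∂μ'' - ∫ t, F t ∂ν''|
        ≤ ε * ((μ'' Set.univ).toReal + (ν'' Set.univ).toReal) := by
      intro ε hε
      obtain ⟨p, hp⟩ := exists_polynomial_near_of_continuousOn 0 1 F hFc.continuousOn ε hε
      have est : ∀ (m : Measure ℝ) [IsFiniteMeasure m], (∀ᵐ t ∂m, t ∈ Set.Ioo (0:ℝ) 1) →
          |∫ t, F t ∂m - ∫ t, p.eval t ∂m| ≤ ε * (m Set.univ).toReal := by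
        intro m _ hm
        rw [← integral_sub (hFi m) (hPint m hm p)]
        have := norm_integral_le_of_norm_le_const (μ := m)
          (f := fun t => F t - p.eval t) (C := ε) ?_
        · simpa [Measure.real] using this
        · filter_upwards [hm] with t ht
          have h1 := hp t (Set.Ioo_subset_Icc_self ht)
          rw [Real.norm_eq_abs, abs_sub_comm]
          exact h1.le
      have e1 := est μ'' hμ''s
      have e2 := est ν'' hν''s
      have h3 := hP p
      calc |∫ t, F t ∂μ'' - ∫ t, F t ∂ν''|
          = |(∫ t, F t ∂μ'' - ∫ t, p.eval t ∂μ'') - (∫ t, F t ∂ν'' - ∫ t, p.eval t ∂ν'')| := by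
            rw [h3]; ring_nf
        _ ≤ |∫ t, F t ∂μ'' - ∫ t, p.eval t ∂μ''| + |∫ t, F t ∂ν'' - ∫ t, p.eval t ∂ν''| :=
            abs_sub _ _
        _ ≤ ε * (μ'' Set.univ).toReal + ε * (ν'' Set.univ).toReal := add_le_add e1 e2
        _ = ε * ((μ'' Set.univ).toReal + (ν'' Set.univ).toReal) := by ring
    set C : ℝ := (μ'' Set.univ).toReal + (ν'' Set.univ).toReal with hCdef
    have hC0 : 0 ≤ C := by positivity
    have habs : |∫ t, F t ∂μ'' - ∫ t, F t ∂ν''| ≤ 0 := by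
      refine le_of_forall_pos_le_add fun ε hε => ?_
      have := key (ε / (C + 1)) (by positivity)
      calc |∫ t, F t ∂μ'' - ∫ t, F t ∂ν''| ≤ ε / (C + 1) * C := this
        _ ≤ ε := by
            rw [div_mul_eq_mul_div, div_le_iff₀ (by linarith)]
            nlinarith
        _ = 0 + ε := by ring
    have := abs_nonpos_iff.mp habs
    linarith
  have hlint : ∀ f : ℝ →ᵇ ℝ≥0, ∫⁻ t, (f t : ℝ≥0∞) ∂μ'' = ∫⁻ t, (f t : ℝ≥0∞) ∂ν'' := by
    intro f
    rw [lintegral_coe_eq_integral _ (hFint f μ''), lintegral_coe_eq_integral _ (hFint f ν''), hbc f]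
  have h'' : μ'' = ν'' := ext_of_forall_lintegral_eq_of_IsFiniteMeasure hlint
  have hemb : MeasurableEmbedding φ := hφ.measurableEmbedding hφi
  have h' : μ' = ν' := by
    ext s hs
    have e1 : μ' s = μ'' (φ '' s) := by
      rw [hμ''def, hemb.map_apply, Set.preimage_image_eq s hφi]
    have e2 : ν' s = ν'' (φ '' s) := by
      rw [hν''def, hemb.map_apply, Set.preimage_image_eq s hφi]
    rw [e1, e2, h'']
  set w2 : ℝ → ℝ≥0∞ := fun x => ENNReal.ofReal (Real.exp x) with hw2def
  have hw2 : Measurable w2 := Real.measurable_exp.ennreal_ofReal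
  have hrec : ∀ m : Measure ℝ, (m.withDensity w1).withDensity w2 = m := by
    intro m
    rw [← withDensity_mul _ hw1 hw2]
    have : w1 * w2 = 1 := by
      funext x
      simp only [Pi.mul_apply, Pi.one_apply, hw1def, hw2def]
      rw [← ENNReal.ofReal_mul (Real.exp_nonneg _), ← Real.exp_add]
      simp
    rw [this, withDensity_one]
  calc μ = (μ.withDensity w1).withDensity w2 := (hrec μ).symm
    _ = (ν.withDensity w1).withDensity w2 := by rw [← hμ'def, ← hν'def, h']
    _ = ν := hrec ν

theorem statement_9 (r ρ : ℝ) (hr : 1 < r) (hρ : 0 < ρ)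
    (q : ℝ → ℝ) (hq : MemQ r ρ q)
    (g : StieltjesFunction ℝ) (hg0 : ∀ x ≤ (0:ℝ), g x = 0)
    (hrep : ∀ s > (0:ℝ),
      s ^ (-ρ) * q s = ∫ x in Set.Ici (0:ℝ), Real.exp (-(s * x)) ∂g.measure) :
    ∀ x > (0:ℝ), g x = r ^ ρ * g (x / r) := by
  intro x hx
  have hr0 : (0:ℝ) < r := lt_trans one_pos hr
  set μ := g.measure with hμdef
  have hgbot : Tendsto g atBot (nhds 0) := by
    have hev : g =ᶠ[atBot] fun _ => (0:ℝ) := by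
      filter_upwards [eventually_le_atBot (0:ℝ)] with y hy
      exact hg0 y hy
    exact Tendsto.congr' hev.symm tendsto_const_nhds
  have hIic : μ (Set.Iic 0) = 0 := by
    rw [g.measure_Iic hgbot 0, hg0 0 le_rfl]
    simp
  have hres : μ.restrict (Set.Ici 0) = μ := by
    refine Measure.restrict_eq_self_of_ae_mem ?_
    rw [ae_iff]
    refine measure_mono_null (fun y hy => ?_) hIic
    simp only [Set.mem_setOf_eq, Set.mem_Ici, not_le] at hy
    exact le_of_lt hy
  have hL : ∀ s > (0:ℝ), ∫⁻ y, ENNReal.ofReal (Real.exp (-(s * y))) ∂μ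
      = ENNReal.ofReal (s ^ (-ρ) * q s) := by
    intro s hs
    have hqs : 0 < s ^ (-ρ) * q s := mul_pos (Real.rpow_pos_of_pos hs _) (hq.1 s hs)
    have hrs := hrep s hs
    rw [hres] at hrs
    have hi : Integrable (fun y => Real.exp (-(s * y))) μ := by
      by_contra hni
      rw [integral_undef hni] at hrs
      linarith
    rw [← ofReal_integral_eq_lintegral_ofReal hi
      (Eventually.of_forall fun y => Real.exp_nonneg _)]
    exact congrArg ENNReal.ofReal hrs.symm
  have hmul : Measurable fun y : ℝ => r * y := measurable_const_mul r
  set ν : Measure ℝ := (ENNReal.ofReal (r ^ ρ)) • Measure.map (fun y => r * y) μ with hνdef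
  have hνIic : ν (Set.Iic 0) = 0 := by
    rw [hνdef, Measure.smul_apply, Measure.map_apply hmul measurableSet_Iic,
      Set.preimage_const_mul_Iic₀ 0 hr0, zero_div, hIic]
    simp
  have hLν : ∀ s > (0:ℝ), ∫⁻ y, ENNReal.ofReal (Real.exp (-(s * y))) ∂ν
      = ENNReal.ofReal (s ^ (-ρ) * q s) := by
    intro s hs
    have hmeas : Measurable fun y : ℝ => ENNReal.ofReal (Real.exp (-(s * y))) :=
      (Real.measurable_exp.comp (measurable_const_mul s).neg).ennreal_ofReal
    rw [hνdef, lintegral_smul_measure, lintegral_map hmeas hmul]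
    have : (fun y => ENNReal.ofReal (Real.exp (-(s * (r * y)))))
        = fun y => ENNReal.ofReal (Real.exp (-((s * r) * y))) := by
      funext y; ring_nf
    rw [this, hL (s * r) (mul_pos hs hr0), smul_eq_mul,
      ← ENNReal.ofReal_mul (Real.rpow_nonneg hr0.le ρ)]
    congr 1
    rw [hq.2.1 s hs, Real.mul_rpow hs.le hr0.le]
    have h1 : r ^ ρ * r ^ (-ρ) = 1 := by
      rw [← Real.rpow_add hr0]
      simp
    calc r ^ ρ * (s ^ (-ρ) * r ^ (-ρ) * q s) = (r ^ ρ * r ^ (-ρ)) * (s ^ (-ρ) * q s) := by ring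
      _ = s ^ (-ρ) * q s := by rw [h1, one_mul]
  have hfin : ∫⁻ y, ENNReal.ofReal (Real.exp (-(1 * y))) ∂μ ≠ ⊤ := by
    rw [hL 1 one_pos]
    exact ofReal_ne_top
  have hμν : μ = ν := laplace_ext μ ν hIic hνIic hfin fun s hs => by rw [hL s hs, hLν s hs]
  have h1 : μ (Set.Ioc 0 x) = ENNReal.ofReal (g x) := by
    rw [hμdef, g.measure_Ioc, hg0 0 le_rfl, sub_zero]
  have hpre : (fun y : ℝ => r * y) ⁻¹' Set.Ioc 0 x = Set.Ioc 0 (x / r) := by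
    ext y
    simp only [Set.mem_preimage, Set.mem_Ioc]
    constructor
    · rintro ⟨ha, hb⟩
      constructor
      · nlinarith
      · rw [le_div_iff₀ hr0, mul_comm]; exact hb
    · rintro ⟨h1, h2⟩
      exact ⟨by positivity, by rw [mul_comm]; exact (le_div_iff₀ hr0).mp h2⟩
  have h2 : ν (Set.Ioc 0 x) = ENNReal.ofReal (r ^ ρ * g (x / r)) := by
    rw [hνdef, Measure.smul_apply, Measure.map_apply hmul measurableSet_Ioc, hpre,
      hμdef, g.measure_Ioc, hg0 0 le_rfl, sub_zero, smul_eq_mul,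
      ← ENNReal.ofReal_mul (Real.rpow_nonneg hr0.le ρ)]
  have h3 : ENNReal.ofReal (g x) = ENNReal.ofReal (r ^ ρ * g (x / r)) := by
    rw [← h1, ← h2, hμν]
  have hgx : 0 ≤ g x := by
    have := g.mono hx.le
    rw [hg0 0 le_rfl] at this
    exact this
  have hgxr : 0 ≤ g (x / r) := by
    have := g.mono (le_of_lt (div_pos hx hr0))
    rw [hg0 0 le_rfl] at this
    exact this
  exact (ENNReal.ofReal_eq_ofReal_iff hgx (mul_nonneg (Real.rpow_nonneg hr0.le ρ) hgxr)).mp h3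
end

section
/- For r > 1, ρ > 0 and p ∈ P_r, the function B_ρ p(x) = x^{−ρ} ∫_0^x y^{ρ−1} p(y) dy satisfies the explicit formula B_ρ p(x) = r^{−ρ{log_r x}} [ (r^ρ − 1)^{−1} ∫_1^r s^{ρ−1} p(s) ds + ∫_1^{r^{{log_r x}}} s^{ρ−1} p(s) ds ], where {t} denotes the fractional part of t. In particular B_ρ p is continuous, positive, log-periodic with period r, and x^ρ B_ρ p(x) is nondecreasing. -/
open Filter Set Real

/-! Put `F(x) = ∫₀ˣ y^(ρ-1) p(y) dy`; it is finite since `p` is bounded and `ρ > 0`, and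
measurable since `p` is right-continuous. The substitution `y ↦ r y` together with
`p(r y) = p(y)` gives `F(r x) = r^ρ F(x)`, so `B_ρ p(x) = x^(-ρ) F(x)` is invariant under
`x ↦ r x` and only depends on `θ = {log_r x}`, i.e. `B_ρ p(x) = B_ρ p(r^θ)`. Taking `x = 1` in the
scaling relation gives `F(1) = (r^ρ - 1)⁻¹ ∫₁ʳ`, and `F(r^θ) = F(1) + ∫₁^(r^θ)` is the formula. -/

open MeasureTheory Topology

theorem measurable_of_continuousWithinAt_Ici {β : Type*} [TopologicalSpace β]
    [TopologicalSpace.PseudoMetrizableSpace β] [MeasurableSpace β] [BorelSpace β] {f : ℝ → β}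
    (hf : ∀ x, ContinuousWithinAt f (Ici x) x) : Measurable f := by
  -- `f` is the pointwise limit of `f (⌈x (n+1)⌉ / (n+1))`, which factor through `Int.ceil`.
  have hlim : ∀ x : ℝ, Tendsto (fun n : ℕ => (⌈x * (n + 1)⌉ : ℝ) / (n + 1)) atTop (𝓝[≥] x) := by
    intro x
    have hge : ∀ n : ℕ, x ≤ (⌈x * (n + 1)⌉ : ℝ) / (n + 1) := fun n => by
      rw [le_div_iff₀ (by positivity)]; exact Int.le_ceil _
    have hle : ∀ n : ℕ, (⌈x * (n + 1)⌉ : ℝ) / (n + 1) ≤ x + 1 / (n + 1) := fun n => by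
      rw [div_le_iff₀ (by positivity), add_mul, one_div_mul_cancel (by positivity)]
      exact (Int.ceil_lt_add_one _).le
    have hupper : Tendsto (fun n : ℕ => x + 1 / ((n : ℝ) + 1)) atTop (𝓝 x) := by
      simpa using tendsto_const_nhds.add (tendsto_one_div_add_atTop_nhds_zero_nat (𝕜 := ℝ))
    exact tendsto_nhdsWithin_iff.2 ⟨tendsto_of_tendsto_of_tendsto_of_le_of_le
      tendsto_const_nhds hupper hge hle, Eventually.of_forall hge⟩
  refine measurable_of_tendsto_metrizable (fun n => ?_)
    (tendsto_pi_nhds.2 fun x => (hf x).tendsto.comp (hlim x))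
  exact (Measurable.of_discrete (f := fun k : ℤ => f (k / (n + 1)))).comp
    (Int.measurable_ceil.comp (measurable_id.mul_const _))

-- `opB ρ p` is the paper's `B_ρ p`.
noncomputable def opB (ρ : ℝ) (p : ℝ → ℝ) (x : ℝ) : ℝ :=
  x ^ (-ρ) * ∫ y in (0:ℝ)..x, y ^ (ρ - 1) * p y

section

variable {p : ℝ → ℝ} {r ρ a b x : ℝ}

theorem MemP.aestronglyMeasurable (hp : MemP r p) :
    AEStronglyMeasurable p (volume.restrict (Ioi 0)) := by
  have hexp : Measurable fun t => p (exp t) := measurable_of_continuousWithinAt_Ici fun t =>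
    (hp.2.2.1 _ (exp_pos t)).comp continuous_exp.continuousWithinAt
      fun _ hs => exp_le_exp.2 hs
  refine (hexp.comp measurable_log).aestronglyMeasurable.congr ?_
  filter_upwards [ae_restrict_mem measurableSet_Ioi] with x hx
  simp [exp_log (mem_Ioi.1 hx)]

theorem MemP.intervalIntegrable_rpow_mul (hp : MemP r p) (hρ : 0 < ρ) (ha : 0 ≤ a) (hb : 0 ≤ b) :
    IntervalIntegrable (fun y => y ^ (ρ - 1) * p y) volume a b := by
  obtain ⟨M, hM⟩ := hp.2.1
  have hsub : uIoc a b ⊆ Ioi 0 := fun y hy => (le_min ha hb).trans_lt hy.1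
  rw [intervalIntegrable_iff]
  refine (intervalIntegrable_iff.1 (intervalIntegral.intervalIntegrable_rpow'
    (by linarith : (-1 : ℝ) < ρ - 1))).mul_bdd (c := M)
    (hp.aestronglyMeasurable.mono_measure (Measure.restrict_mono hsub le_rfl)) ?_
  filter_upwards [ae_restrict_mem measurableSet_uIoc] with y hy
  rw [norm_of_nonneg (hp.1 y (hsub hy)).le]
  exact hM y (hsub hy)

theorem integral_rpow_mul_mul_of_mul_periodic (hr : 0 < r) (hper : ∀ x > 0, p (x * r) = p x)
    (hx : 0 ≤ x) :
    ∫ y in (0:ℝ)..x * r, y ^ (ρ - 1) * p y = r ^ ρ * ∫ y in (0:ℝ)..x, y ^ (ρ - 1) * p y := by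
  have hcomp : ∫ y in (0:ℝ)..x, (y * r) ^ (ρ - 1) * p (y * r) =
      ∫ y in (0:ℝ)..x, r ^ (ρ - 1) * (y ^ (ρ - 1) * p y) := by
    refine intervalIntegral.integral_congr_ae (Eventually.of_forall fun y hy => ?_)
    have hy : 0 < y := (uIoc_of_le hx ▸ hy).1
    rw [hper y hy, mul_rpow hy.le hr.le]
    ring
  nth_rw 1 [← zero_mul r]
  rw [← intervalIntegral.smul_integral_comp_mul_right, hcomp,
    intervalIntegral.integral_const_mul, smul_eq_mul, ← mul_assoc, rpow_sub_one hr.ne',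
    mul_div_cancel₀ _ hr.ne']

theorem opB_mul_of_mul_periodic (hr : 0 < r) (hper : ∀ x > 0, p (x * r) = p x) (hx : 0 < x) :
    opB ρ p (x * r) = opB ρ p x := by
  have hrρ : 0 < r ^ ρ := rpow_pos_of_pos hr ρ
  rw [opB, opB, integral_rpow_mul_mul_of_mul_periodic hr hper hx.le, mul_rpow hx.le hr.le,
    rpow_neg hr.le]
  field_simp

theorem MemP.integral_zero_one_eq (hp : MemP r p) (hr : 1 < r) (hρ : 0 < ρ) :
    ∫ y in (0:ℝ)..1, y ^ (ρ - 1) * p y = (r ^ ρ - 1)⁻¹ * ∫ y in (1:ℝ)..r, y ^ (ρ - 1) * p y := by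
  have hr0 : 0 < r := one_pos.trans hr
  have hadd := intervalIntegral.integral_add_adjacent_intervals
    (hp.intervalIntegrable_rpow_mul hρ le_rfl zero_le_one)
    (hp.intervalIntegrable_rpow_mul hρ zero_le_one hr0.le)
  have hscale := integral_rpow_mul_mul_of_mul_periodic (ρ := ρ) hr0 hp.2.2.2.2 zero_le_one
  rw [one_mul] at hscale
  rw [eq_inv_mul_iff_mul_eq₀ (sub_ne_zero.2 (one_lt_rpow hr hρ).ne')]
  linear_combination -hscale - hadd

theorem MemP.opB_eq (hp : MemP r p) (hr : 1 < r) (hρ : 0 < ρ) (hx : 0 < x) :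
    opB ρ p x = r ^ (-(ρ * Int.fract (logb r x))) *
      ((r ^ ρ - 1)⁻¹ * (∫ s in (1:ℝ)..r, s ^ (ρ - 1) * p s) +
        ∫ s in (1:ℝ)..(r ^ Int.fract (logb r x)), s ^ (ρ - 1) * p s) := by
  have hr0 : 0 < r := one_pos.trans hr
  have hperiodic : Function.Periodic (fun t : ℝ => opB ρ p (r ^ t)) 1 := fun t => by
    dsimp only
    rw [rpow_add_one hr0.ne', opB_mul_of_mul_periodic hr0 hp.2.2.2.2 (rpow_pos_of_pos hr0 t)]
  have hfract : opB ρ p x = opB ρ p (r ^ Int.fract (logb r x)) := by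
    rw [← Int.self_sub_floor, ← mul_one (⌊logb r x⌋ : ℝ), hperiodic.sub_int_mul_eq,
      rpow_logb hr0 hr.ne' hx]
  rw [hfract, opB, ← rpow_mul hr0.le, ← intervalIntegral.integral_add_adjacent_intervals
    (hp.intervalIntegrable_rpow_mul hρ le_rfl zero_le_one)
    (hp.intervalIntegrable_rpow_mul hρ zero_le_one (rpow_pos_of_pos hr0 _).le),
    hp.integral_zero_one_eq hr hρ, mul_comm (Int.fract _), neg_mul]

theorem MemP.integral_rpow_mul_pos (hp : MemP r p) (hρ : 0 < ρ) (hx : 0 < x) :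
    0 < ∫ y in (0:ℝ)..x, y ^ (ρ - 1) * p y :=
  intervalIntegral.intervalIntegral_pos_of_pos_on
    (hp.intervalIntegrable_rpow_mul hρ le_rfl hx.le)
    (fun y hy => mul_pos (rpow_pos_of_pos hy.1 _) (hp.1 y hy.1)) hx

theorem MemP.monotoneOn_integral_rpow_mul (hp : MemP r p) (hρ : 0 < ρ) :
    MonotoneOn (fun x => ∫ y in (0:ℝ)..x, y ^ (ρ - 1) * p y) (Ioi 0) := fun a ha b hb hab =>
  intervalIntegral.integral_mono_interval le_rfl (le_of_lt ha) hab
    (by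
      filter_upwards [ae_restrict_mem measurableSet_Ioc] with y hy
      exact mul_nonneg (rpow_nonneg hy.1.le _) (hp.1 y hy.1).le)
    (hp.intervalIntegrable_rpow_mul hρ le_rfl (le_of_lt hb))

theorem MemP.continuousOn_opB (hp : MemP r p) (hρ : 0 < ρ) :
    ContinuousOn (opB ρ p) (Ioi 0) := by
  refine continuousOn_of_forall_continuousAt fun x (hx : 0 < x) => ?_
  have hprim : ContinuousAt (fun x => ∫ y in (0:ℝ)..x, y ^ (ρ - 1) * p y) x := by
    refine (intervalIntegral.continuousOn_primitive_interval' (hp.intervalIntegrable_rpow_mul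
      (b := x + 1) hρ le_rfl (by linarith)) left_mem_uIcc).continuousAt ?_
    rw [uIcc_of_le (by linarith)]
    exact Icc_mem_nhds hx (by linarith)
  exact (continuousAt_rpow_const x (-ρ) (Or.inl hx.ne')).mul hprim

end

/-- Explicit formula and structural properties of the operator `B_ρ`. -/
theorem statement_14 (p : ℝ → ℝ) (r ρ : ℝ) (hr : 1 < r) (hρ : 0 < ρ)
    (hp : MemP r p) :
    (∀ x > (0:ℝ),
      x ^ (-ρ) * ∫ y in (0:ℝ)..x, y ^ (ρ - 1) * p y =
        r ^ (-(ρ * Int.fract (Real.logb r x))) *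
          ((r ^ ρ - 1)⁻¹ * (∫ s in (1:ℝ)..r, s ^ (ρ - 1) * p s) +
            ∫ s in (1:ℝ)..(r ^ Int.fract (Real.logb r x)), s ^ (ρ - 1) * p s)) ∧
    ContinuousOn (fun x : ℝ => x ^ (-ρ) * ∫ y in (0:ℝ)..x, y ^ (ρ - 1) * p y)
      (Set.Ioi 0) ∧
    (∀ x > (0:ℝ), 0 < x ^ (-ρ) * ∫ y in (0:ℝ)..x, y ^ (ρ - 1) * p y) ∧
    (∀ x > (0:ℝ),
      (x * r) ^ (-ρ) * (∫ y in (0:ℝ)..(x * r), y ^ (ρ - 1) * p y) =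
        x ^ (-ρ) * ∫ y in (0:ℝ)..x, y ^ (ρ - 1) * p y) ∧
    MonotoneOn (fun x : ℝ => ∫ y in (0:ℝ)..x, y ^ (ρ - 1) * p y) (Set.Ioi 0) := by
  have hr0 : 0 < r := one_pos.trans hr
  exact ⟨fun x hx => hp.opB_eq hr hρ hx, hp.continuousOn_opB hρ,
    fun x hx => mul_pos (rpow_pos_of_pos hx _) (hp.integral_rpow_mul_pos hρ hx),
    fun x hx => opB_mul_of_mul_periodic hr0 hp.2.2.2.2 hx, hp.monotoneOn_integral_rpow_mul hρ⟩
end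

section
/- (Karamata, ρ = 0 case) Let u: [0,∞) → [0,∞), ℓ slowly varying at infinity, p₀ ∈ P_r. If lim_{n→∞} r^n z · u(r^n z)/ℓ(r^n z) = p₀(z) at all continuity points z of p₀, and 0 < liminf_{x→∞} x u(x)/ℓ(x) ≤ limsup_{x→∞} x u(x)/ℓ(x) < ∞, then U(x) = ∫_0^x u(y) dy is slowly varying at infinity and lim_{x→∞} U(x)/ℓ(x) = ∞. -/
open Filter Set Real

open MeasureTheory Topology

/-!
Put `m x = x * u x`, so that `c ℓ ≤ m ≤ C ℓ` eventually and
`U(λx) - U(x) = ∫_x^{λx} m(s) ds / s`. Since `ℓ` is slowly varying, for each fixed `λ` the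
ratio `m(λx)/m(x)` is eventually bounded above and below. The function `m` is measurable (`ℓ`
need not be), so the Egorov–Steinhaus argument behind the uniform convergence theorem makes
these bounds uniform for `λ` in compact sets. Hence `∫_x^{2x} u ≥ γ ℓ(x)`; summing this over the
dyadic blocks below `x` and using `ℓ(x/2^j) ~ ℓ(x)` gives `U/ℓ → ∞`. On the other hand
`0 ≤ U(λx) - U(x) = O(ℓ(x)) = o(U(x))`, so `U` is slowly varying.
-/

theorem tendsto_measure_inter_of_eventually_notMem {α : Type*} [MeasurableSpace α]
    {μ : Measure α} {s : Set α} (hs : μ s ≠ ⊤) {E : ℕ → Set α}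
    (hE : ∀ k, MeasurableSet (E k)) (h : ∀ x, ∀ᶠ k in atTop, x ∉ E k) :
    Tendsto (fun k => μ (s ∩ E k)) atTop (𝓝 0) := by
  set G : ℕ → Set α := fun n => ⋃ k ≥ n, E k
  have hG : Tendsto (μ.restrict s ∘ G) atTop (𝓝 (μ.restrict s (⋂ n, G n))) := by
    refine tendsto_measure_iInter_atTop (fun n => ?_) (fun m n hmn => ?_) ⟨0, ?_⟩
    · exact (MeasurableSet.iUnion fun k =>
        MeasurableSet.iUnion fun (_ : k ≥ n) => hE k).nullMeasurableSet
    · exact biUnion_mono (fun k hk => le_trans hmn hk) fun _ _ => le_rfl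
    · exact ne_top_of_le_ne_top (by rwa [Measure.restrict_apply_univ])
        (measure_mono (subset_univ _))
  have hempty : ⋂ n, G n = ∅ := by
    refine eq_empty_iff_forall_notMem.2 fun x hx => ?_
    obtain ⟨n, hn⟩ := eventually_atTop.1 (h x)
    obtain ⟨k, hk, hxk⟩ := mem_iUnion₂.1 (mem_iInter.1 hx n)
    exact hn k hk hxk
  rw [hempty, measure_empty] at hG
  refine tendsto_of_tendsto_of_tendsto_of_le_of_le tendsto_const_nhds hG (fun _ => bot_le)
    fun n => ?_
  rw [inter_comm, ← Measure.restrict_apply (hE n)]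
  exact measure_mono (subset_biUnion_of_mem (u := E) (le_refl n))

theorem exists_mem_Icc_notMem_of_measure_add_lt {a b : ℝ} {A A' : Set ℝ}
    (h : volume A + volume A' < ENNReal.ofReal (b - a)) :
    ∃ w ∈ Icc a b, w ∉ A ∧ w ∉ A' := by
  by_contra! hcover
  have hsub : Icc a b ⊆ A ∪ A' := fun w hw => or_iff_not_imp_left.2 (hcover w hw)
  have hle := (measure_mono (μ := volume) hsub).trans (measure_union_le A A')
  rw [Real.volume_Icc] at hle
  exact h.not_ge hle

theorem eventually_forall_Icc_abs_sub_le_two_mul {h : ℝ → ℝ} (hh : Measurable h) {B : ℝ}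
    (hB : ∀ v, ∀ᶠ t in atTop, |h (t + v) - h t| ≤ B) (U : ℝ) :
    ∀ᶠ t in atTop, ∀ v ∈ Icc 0 U, |h (t + v) - h t| ≤ 2 * B := by
  set bad : ℝ → Set ℝ := fun a => {w | B < |h (a + w) - h a|}
  have hsmall : ∀ a : ℕ → ℝ, Tendsto a atTop atTop → ∀ L : ℝ,
      ∀ᶠ k in atTop, volume (Icc 0 L ∩ bad (a k)) < 2⁻¹ := fun a ha L =>
    (tendsto_measure_inter_of_eventually_notMem (by simp)
      (fun k => measurableSet_lt measurable_const
        ((hh.comp (measurable_const_add _)).sub measurable_const).abs)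
      (fun w => (ha.eventually (hB w)).mono fun _ hk => not_lt.2 hk)).eventually
      (gt_mem_nhds (by norm_num))
  by_contra hcon
  obtain ⟨t, ht, hbad⟩ := frequently_iff_seq_forall.1 (not_eventually.1 hcon)
  push Not at hbad
  choose v hv hgt using hbad
  have ht' : Tendsto (fun k => t k + v k) atTop atTop :=
    tendsto_atTop_mono (fun k => le_add_of_nonneg_right (hv k).1) ht
  obtain ⟨k, hk, hk'⟩ := ((hsmall t ht (U + 1)).and (hsmall _ ht' 1)).exists
  -- A point of the unit window at `v k` that is good for both base points `t k` and `t k + v k`.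
  obtain ⟨w, hw, hw₁, hw₂⟩ := exists_mem_Icc_notMem_of_measure_add_lt
    (a := v k) (b := v k + 1) (A := Icc 0 (U + 1) ∩ bad (t k))
    (A' := (· + -v k) ⁻¹' (Icc 0 1 ∩ bad (t k + v k))) (by
      rw [measure_preimage_add_right, add_sub_cancel_left, ENNReal.ofReal_one,
        ← ENNReal.inv_two_add_inv_two]
      exact ENNReal.add_lt_add hk hk')
  have h₁ : |h (t k + w) - h (t k)| ≤ B := not_lt.1 fun hlt =>
    hw₁ ⟨⟨(hv k).1.trans hw.1, by linarith [hw.2, (hv k).2]⟩, hlt⟩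
  have h₂ : |h (t k + w) - h (t k + v k)| ≤ B := by
    refine not_lt.1 fun hlt => hw₂ ⟨⟨by linarith [hw.1], by linarith [hw.2]⟩, ?_⟩
    change B < |h (t k + v k + (w + -v k)) - h (t k + v k)|
    rwa [← sub_eq_add_neg, add_add_sub_cancel]
  have htri := abs_sub_le (h (t k + v k)) (h (t k + w)) (h (t k))
  rw [abs_sub_comm (h (t k + v k)) (h (t k + w))] at htri
  linarith [hgt k]

theorem abs_log_sub_log_le_log {a b B : ℝ} (ha : 0 < a) (hb : 0 < b) (hab : b ≤ B * a)
    (hba : a ≤ B * b) : |log b - log a| ≤ log B := by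
  have hB : 0 < B := pos_of_mul_pos_left (hb.trans_le hab) ha.le
  rw [abs_sub_le_iff, sub_le_iff_le_add, sub_le_iff_le_add, ← log_mul hB.ne' ha.ne',
    ← log_mul hB.ne' hb.ne']
  exact ⟨log_le_log hb hab, log_le_log ha hba⟩

theorem le_mul_of_abs_log_sub_log_le {a b K : ℝ} (ha : 0 < a) (hb : 0 < b) (hK : 0 < K)
    (h : |log b - log a| ≤ log K) : b ≤ K * a := by
  rw [← log_le_log_iff hb (by positivity), log_mul hK.ne' ha.ne']
  linarith [le_abs_self (log b - log a)]

theorem eventually_forall_Icc_le_sq_mul {m : ℝ → ℝ} (hm : Measurable m)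
    (hpos : ∀ᶠ x in atTop, 0 < m x) {B : ℝ}
    (hB : ∀ lam > 0, ∀ᶠ x in atTop, m (lam * x) ≤ B * m x) (Λ : ℝ) :
    ∀ᶠ x in atTop, ∀ s ∈ Icc x (Λ * x), m s ≤ B ^ 2 * m x ∧ m x ≤ B ^ 2 * m s := by
  have hB0 : 0 < B := by
    obtain ⟨x, hx, hmx⟩ := ((hB 1 one_pos).and hpos).exists
    rw [one_mul] at hx
    exact pos_of_mul_pos_left (hmx.trans_le hx) hmx.le
  have hpos' : ∀ᶠ t in atTop, 0 < m (exp t) := tendsto_exp_atTop.eventually hpos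
  have hincr : ∀ v, ∀ᶠ t in atTop, |log (m (exp (t + v))) - log (m (exp t))| ≤ log B := by
    intro v
    have hshift : Tendsto (fun t => t + v) atTop atTop :=
      tendsto_atTop_add_const_right _ v tendsto_id
    filter_upwards [hpos', hshift.eventually hpos', tendsto_exp_atTop.eventually (hB _ (exp_pos v)),
      (tendsto_exp_atTop.comp hshift).eventually (hB _ (exp_pos (-v)))] with t h₁ h₂ h₃ h₄
    refine abs_log_sub_log_le_log h₁ h₂ ?_ ?_
    · rwa [exp_add, mul_comm]
    · rwa [Function.comp_apply, ← exp_add, neg_add_cancel_comm_assoc] at h₄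
  obtain ⟨X, hX⟩ := eventually_atTop.1 hpos
  have huni := eventually_forall_Icc_abs_sub_le_two_mul (h := fun t => log (m (exp t)))
    (measurable_log.comp (hm.comp measurable_exp)) hincr (log Λ)
  filter_upwards [tendsto_log_atTop.eventually huni, eventually_ge_atTop X, eventually_gt_atTop 0]
    with x hx hxX hx0 s hs
  have hs0 : 0 < s := hx0.trans_le hs.1
  have hΛ : 0 < Λ := pos_of_mul_pos_left (hs0.trans_le hs.2) hx0.le
  have hv : log s - log x ∈ Icc 0 (log Λ) :=
    ⟨sub_nonneg.2 (log_le_log hx0 hs.1),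
      by linarith [log_le_log hs0 hs.2, log_mul hΛ.ne' hx0.ne']⟩
  have hlog := hx _ hv
  rw [add_sub_cancel, exp_log hs0, exp_log hx0, two_mul, ← log_mul hB0.ne' hB0.ne', ← sq]
    at hlog
  have hmx := hX x hxX
  have hms := hX s (hxX.trans hs.1)
  exact ⟨le_mul_of_abs_log_sub_log_le hmx hms (by positivity) hlog,
    le_mul_of_abs_log_sub_log_le hms hmx (by positivity) (by rwa [abs_sub_comm])⟩

theorem SlowlyVarying.eventually_le_mul {l m : ℝ → ℝ} (hl : SlowlyVarying l) {c C : ℝ}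
    (hc : 0 < c) (hm : ∀ᶠ x in atTop, c * l x ≤ m x ∧ m x ≤ C * l x) :
    ∀ lam > 0, ∀ᶠ x in atTop, m (lam * x) ≤ 2 * C / c * m x := by
  intro lam hlam
  filter_upwards [hl.1, hm, (tendsto_id.const_mul_atTop hlam).eventually hm,
    (hl.2 lam hlam).eventually (gt_mem_nhds one_lt_two)] with x hlx hmx hmlx hratio
  have hC : 0 ≤ C :=
    nonneg_of_mul_nonneg_left ((mul_pos hc hlx).le.trans (hmx.1.trans hmx.2)) hlx
  rw [div_lt_iff₀ hlx] at hratio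
  calc m (lam * x) ≤ C * l (lam * x) := hmlx.2
    _ ≤ C * (2 * l x) := mul_le_mul_of_nonneg_left hratio.le hC
    _ = 2 * C / c * (c * l x) := by field_simp
    _ ≤ 2 * C / c * m x := mul_le_mul_of_nonneg_left hmx.1 (by positivity)

theorem SlowlyVarying.tendsto_div_atTop {l F : ℝ → ℝ} (hl : SlowlyVarying l)
    (hF0 : ∀ᶠ x in atTop, 0 ≤ F x) {γ : ℝ} (hγ : 0 < γ)
    (hF : ∀ᶠ x in atTop, γ * l x ≤ F (2 * x) - F x) :
    Tendsto (fun x => F x / l x) atTop atTop := by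
  rw [tendsto_atTop]
  intro A
  obtain ⟨k, hk⟩ := exists_nat_ge (2 * A / γ)
  have hscale : ∀ j : ℕ, Tendsto (fun x : ℝ => x / 2 ^ j) atTop atTop := fun j =>
    tendsto_id.atTop_div_const (by positivity)
  have hhalf : ∀ j : ℕ, ∀ᶠ x in atTop, l x / 2 ≤ l (x / 2 ^ j) := by
    intro j
    filter_upwards [hl.1, (hl.2 _ (by positivity : (0:ℝ) < (2 ^ j)⁻¹)).eventually
      (lt_mem_nhds one_half_lt_one)] with x hlx hx
    rw [lt_div_iff₀ hlx, inv_mul_eq_div] at hx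
    linarith
  have hstep : ∀ j : ℕ, ∀ᶠ x in atTop,
      γ * l (x / 2 ^ (j + 1)) ≤ F (x / 2 ^ j) - F (x / 2 ^ (j + 1)) := by
    intro j
    filter_upwards [(hscale (j + 1)).eventually hF] with x hx
    rwa [show 2 * (x / 2 ^ (j + 1)) = x / 2 ^ j by rw [pow_succ]; field_simp] at hx
  filter_upwards [hl.1, (hscale k).eventually hF0, (Finset.range k).eventually_all.2
    fun j _ => (hhalf (j + 1)).and (hstep j)] with x hlx hFk hsteps
  rw [le_div_iff₀ hlx]
  -- Each of the dyadic blocks `[x / 2 ^ (j + 1), x / 2 ^ j]`, `j < k`, contributes `γ ℓ(x) / 2`.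
  calc A * l x ≤ k * γ * (l x / 2) := by
        rw [div_le_iff₀ hγ] at hk
        nlinarith
    _ = ∑ j ∈ Finset.range k, γ * (l x / 2) := by
        rw [Finset.sum_const, Finset.card_range, nsmul_eq_mul]
        ring
    _ ≤ ∑ j ∈ Finset.range k, (F (x / 2 ^ j) - F (x / 2 ^ (j + 1))) :=
        Finset.sum_le_sum fun j hj =>
          (mul_le_mul_of_nonneg_left (hsteps j hj).1 hγ.le).trans (hsteps j hj).2
    _ = F x - F (x / 2 ^ k) := by
        rw [Finset.sum_range_sub' (fun j => F (x / 2 ^ j)), pow_zero, div_one]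
    _ ≤ F x := by linarith

theorem tendsto_div_nhds_one_of_sub_le {F l : ℝ → ℝ}
    (hF : Tendsto (fun x => F x / l x) atTop atTop) (hl : ∀ᶠ x in atTop, 0 < l x) {lam D : ℝ}
    (hmono : ∀ᶠ x in atTop, F x ≤ F (lam * x))
    (hD : ∀ᶠ x in atTop, F (lam * x) - F x ≤ D * l x) :
    Tendsto (fun x => F (lam * x) / F x) atTop (𝓝 1) := by
  have hupper : Tendsto (fun x => 1 + D * (F x / l x)⁻¹) atTop (𝓝 1) := by
    simpa using tendsto_const_nhds.add ((tendsto_inv_atTop_zero.comp hF).const_mul D)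
  have hbounds : ∀ᶠ x in atTop,
      1 ≤ F (lam * x) / F x ∧ F (lam * x) / F x ≤ 1 + D * (F x / l x)⁻¹ := by
    filter_upwards [hF.eventually_gt_atTop 0, hl, hmono, hD] with x hFl hlx hm hd
    have hFx : 0 < F x := (div_pos_iff_of_pos_right hlx).1 hFl
    refine ⟨(one_le_div hFx).2 hm, ?_⟩
    calc F (lam * x) / F x ≤ (F x + D * l x) / F x := by gcongr; linarith
      _ = 1 + D * (F x / l x)⁻¹ := by field_simp
  exact tendsto_of_tendsto_of_tendsto_of_le_of_le' tendsto_const_nhds hupper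
    (hbounds.mono fun _ h => h.1) (hbounds.mono fun _ h => h.2)

theorem tendsto_comp_mul_div_of_one_le {F : ℝ → ℝ}
    (h : ∀ lam ≥ 1, Tendsto (fun x => F (lam * x) / F x) atTop (𝓝 1)) {lam : ℝ}
    (hlam : 0 < lam) : Tendsto (fun x => F (lam * x) / F x) atTop (𝓝 1) := by
  rcases le_or_gt 1 lam with h1 | h1
  · exact h lam h1
  have hinv := ((h lam⁻¹ ((one_le_inv₀ hlam).2 h1.le)).comp
    (tendsto_id.const_mul_atTop hlam)).inv₀ one_ne_zero
  rw [inv_one] at hinv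
  refine hinv.congr fun x => ?_
  simp [inv_mul_cancel_left₀ hlam.ne']

theorem integral_le_mul_log {u : ℝ → ℝ} {x lam M : ℝ} (hx : 0 < x) (hlam : 1 ≤ lam)
    (hu : IntervalIntegrable u volume x (lam * x)) (hM : ∀ s ∈ Icc x (lam * x), s * u s ≤ M) :
    ∫ s in x..lam * x, u s ≤ M * log lam := by
  have hxl : x ≤ lam * x := le_mul_of_one_le_left hx.le hlam
  have hinv : IntervalIntegrable (fun s => M * s⁻¹) volume x (lam * x) :=
    (intervalIntegral.intervalIntegrable_inv (fun s hs => ?_) continuousOn_id).const_mul M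
  calc ∫ s in x..lam * x, u s ≤ ∫ s in x..lam * x, M * s⁻¹ :=
        intervalIntegral.integral_mono_on hxl hu hinv fun s hs => by
          rw [← div_eq_mul_inv, le_div_iff₀ (hx.trans_le hs.1), mul_comm]
          exact hM s hs
    _ = M * log lam := by
        rw [intervalIntegral.integral_const_mul, integral_inv_of_pos hx (hx.trans_le hxl),
          mul_div_cancel_right₀ _ hx.ne']
  rw [uIcc_of_le hxl] at hs
  exact (hx.trans_le hs.1).ne'

theorem mul_log_le_integral {u : ℝ → ℝ} {x lam M : ℝ} (hx : 0 < x) (hlam : 1 ≤ lam)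
    (hu : IntervalIntegrable u volume x (lam * x)) (hM : ∀ s ∈ Icc x (lam * x), M ≤ s * u s) :
    M * log lam ≤ ∫ s in x..lam * x, u s := by
  have hxl : x ≤ lam * x := le_mul_of_one_le_left hx.le hlam
  have hinv : IntervalIntegrable (fun s => M * s⁻¹) volume x (lam * x) :=
    (intervalIntegral.intervalIntegrable_inv (fun s hs => ?_) continuousOn_id).const_mul M
  calc M * log lam = ∫ s in x..lam * x, M * s⁻¹ := by
        rw [intervalIntegral.integral_const_mul, integral_inv_of_pos hx (hx.trans_le hxl),
          mul_div_cancel_right₀ _ hx.ne']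
    _ ≤ ∫ s in x..lam * x, u s :=
        intervalIntegral.integral_mono_on hxl hinv hu fun s hs => by
          rw [← div_eq_mul_inv, div_le_iff₀ (hx.trans_le hs.1), mul_comm]
          exact hM s hs
  rw [uIcc_of_le hxl] at hs
  exact (hx.trans_le hs.1).ne'

theorem intervalIntegrable_of_integrableOn_Icc_zero {u : ℝ → ℝ}
    (huint : ∀ x, IntegrableOn u (Icc 0 x)) {a b : ℝ} (ha : 0 ≤ a) (hab : a ≤ b) :
    IntervalIntegrable u volume a b := by
  refine IntegrableOn.intervalIntegrable ?_
  rw [uIcc_of_le hab]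
  exact (huint b).mono_set (Icc_subset_Icc_left ha)

theorem integral_sub_integral_zero {u : ℝ → ℝ} (huint : ∀ x, IntegrableOn u (Icc 0 x))
    {a b : ℝ} (ha : 0 ≤ a) (hab : a ≤ b) :
    (∫ y in (0:ℝ)..b, u y) - ∫ y in (0:ℝ)..a, u y = ∫ y in a..b, u y :=
  intervalIntegral.integral_interval_sub_left
    (intervalIntegrable_of_integrableOn_Icc_zero huint le_rfl (ha.trans hab))
    (intervalIntegrable_of_integrableOn_Icc_zero huint le_rfl ha)

theorem tendsto_integral_div_atTop {u l : ℝ → ℝ} (hl : SlowlyVarying l)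
    (hu0 : ∀ x ≥ 0, 0 ≤ u x) (huint : ∀ x, IntegrableOn u (Icc 0 x)) {c K : ℝ}
    (hc : 0 < c) (hK : 0 < K) (hlow : ∀ᶠ x in atTop, c * l x ≤ x * u x)
    (hwin : ∀ᶠ x in atTop, ∀ s ∈ Icc x (2 * x), x * u x ≤ K * (s * u s)) :
    Tendsto (fun x => (∫ y in (0:ℝ)..x, u y) / l x) atTop atTop := by
  refine hl.tendsto_div_atTop ((eventually_ge_atTop 0).mono fun x hx =>
    intervalIntegral.integral_nonneg hx fun y hy => hu0 y hy.1)
    (by positivity : 0 < c / K * log 2) ?_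
  filter_upwards [hlow, hwin, eventually_gt_atTop 0] with x hx hxw hx0
  have hx2 : x ≤ 2 * x := by linarith
  rw [integral_sub_integral_zero huint hx0.le hx2]
  calc c / K * log 2 * l x = c * l x / K * log 2 := by ring
    _ ≤ ∫ y in x..2 * x, u y :=
        mul_log_le_integral hx0 one_le_two
          (intervalIntegrable_of_integrableOn_Icc_zero huint hx0.le hx2)
          fun s hs => (div_le_iff₀' hK).2 (hx.trans (hxw s hs))

theorem tendsto_integral_mul_div_integral {u l : ℝ → ℝ} (hl : ∀ᶠ x in atTop, 0 < l x)
    (hu0 : ∀ x ≥ 0, 0 ≤ u x) (huint : ∀ x, IntegrableOn u (Icc 0 x))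
    (hU : Tendsto (fun x => (∫ y in (0:ℝ)..x, u y) / l x) atTop atTop) {C K lam : ℝ}
    (hK : 0 ≤ K) (hlam : 1 ≤ lam) (hup : ∀ᶠ x in atTop, x * u x ≤ C * l x)
    (hwin : ∀ᶠ x in atTop, ∀ s ∈ Icc x (lam * x), s * u s ≤ K * (x * u x)) :
    Tendsto (fun x => (∫ y in (0:ℝ)..lam * x, u y) / ∫ y in (0:ℝ)..x, u y)
      atTop (𝓝 1) := by
  refine tendsto_div_nhds_one_of_sub_le (F := fun x => ∫ y in (0:ℝ)..x, u y) hU hl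
    (D := K * C * log lam) ?_ ?_
  · filter_upwards [eventually_gt_atTop 0] with x hx0
    have hxl : x ≤ lam * x := le_mul_of_one_le_left hx0.le hlam
    rw [← sub_nonneg, integral_sub_integral_zero huint hx0.le hxl]
    exact intervalIntegral.integral_nonneg hxl fun y hy => hu0 y (hx0.le.trans hy.1)
  · filter_upwards [hup, hwin, eventually_gt_atTop 0] with x hx hxw hx0
    have hxl : x ≤ lam * x := le_mul_of_one_le_left hx0.le hlam
    rw [integral_sub_integral_zero huint hx0.le hxl]
    calc ∫ y in x..lam * x, u y ≤ K * (C * l x) * log lam :=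
          integral_le_mul_log hx0 hlam
            (intervalIntegrable_of_integrableOn_Icc_zero huint hx0.le hxl) fun s hs =>
              (hxw s hs).trans (mul_le_mul_of_nonneg_left hx hK)
      _ = K * C * log lam * l x := by ring

theorem statement_15_general (u : ℝ → ℝ) (l : ℝ → ℝ)
    (hl : SlowlyVarying l)
    (hu0 : ∀ x ≥ (0:ℝ), 0 ≤ u x) (hum : Measurable u)
    (huint : ∀ x : ℝ, MeasureTheory.IntegrableOn u (Set.Icc 0 x))
    (hlb : ∃ c > (0:ℝ), ∀ᶠ x in Filter.atTop, c ≤ x * u x / l x)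
    (hub : ∃ C : ℝ, ∀ᶠ x in Filter.atTop, x * u x / l x ≤ C) :
    (∀ lam > (0:ℝ),
      Filter.Tendsto
        (fun x : ℝ => (∫ y in (0:ℝ)..(lam * x), u y) / ∫ y in (0:ℝ)..x, u y)
        Filter.atTop (nhds 1)) ∧
    Filter.Tendsto (fun x : ℝ => (∫ y in (0:ℝ)..x, u y) / l x)
      Filter.atTop Filter.atTop := by
  obtain ⟨c, hc, hlbc⟩ := hlb
  obtain ⟨C, hubC⟩ := hub
  have hcomp : ∀ᶠ x in atTop, c * l x ≤ x * u x ∧ x * u x ≤ C * l x := by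
    filter_upwards [hl.1, hlbc, hubC] with x hlx h₁ h₂
    exact ⟨(le_div_iff₀ hlx).1 h₁, (div_le_iff₀ hlx).1 h₂⟩
  have hpos : ∀ᶠ x in atTop, 0 < x * u x := by
    filter_upwards [hl.1, hcomp] with x hlx hx using (mul_pos hc hlx).trans_le hx.1
  have hC : 0 < C := by
    obtain ⟨x, hlx, hx⟩ := (hl.1.and hcomp).exists
    nlinarith [hx.1, hx.2]
  have hwin := eventually_forall_Icc_le_sq_mul (m := fun x => x * u x) (measurable_id.mul hum)
    hpos (hl.eventually_le_mul hc hcomp)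
  have hU := tendsto_integral_div_atTop hl hu0 huint hc (by positivity)
    (hcomp.mono fun _ h => h.1) ((hwin 2).mono fun _ h s hs => (h s hs).2)
  refine ⟨fun lam hlam => tendsto_comp_mul_div_of_one_le (F := fun x => ∫ y in (0:ℝ)..x, u y)
    (fun lam hlam => ?_) hlam, hU⟩
  exact tendsto_integral_mul_div_integral hl.1 hu0 huint hU (sq_nonneg _) hlam
    (hcomp.mono fun _ h => h.2) ((hwin lam).mono fun _ h s hs => (h s hs).1)

/-- Karamata theorem, `ρ = 0` case. -/
theorem statement_15 (u p₀ : ℝ → ℝ) (r : ℝ) (l : ℝ → ℝ)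
    (hr : 1 < r) (hl : SlowlyVarying l)
    (hu0 : ∀ x ≥ (0:ℝ), 0 ≤ u x) (hum : Measurable u)
    (huint : ∀ x : ℝ, MeasureTheory.IntegrableOn u (Set.Icc 0 x))
    (hp₀ : MemP r p₀)
    (hlim : ∀ z > (0:ℝ), ContinuousAt p₀ z →
      Filter.Tendsto
        (fun n : ℕ => (r^n * z) * u (r^n * z) / l (r^n * z))
        Filter.atTop (nhds (p₀ z)))
    (hlb : ∃ c > (0:ℝ), ∀ᶠ x in Filter.atTop, c ≤ x * u x / l x)
    (hub : ∃ C : ℝ, ∀ᶠ x in Filter.atTop, x * u x / l x ≤ C) :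
    (∀ lam > (0:ℝ),
      Filter.Tendsto
        (fun x : ℝ => (∫ y in (0:ℝ)..(lam * x), u y) / ∫ y in (0:ℝ)..x, u y)
        Filter.atTop (nhds 1)) ∧
    Filter.Tendsto (fun x : ℝ => (∫ y in (0:ℝ)..x, u y) / l x)
      Filter.atTop Filter.atTop :=
  statement_15_general u l hl hu0 hum huint hlb hub
end

section
/- (Monotone density theorem) Suppose U(x) = ∫_0^x u(y) dy with u ultimately monotone, and lim_{n→∞} U(r^n z)/((r^n z)^ρ ℓ(r^n z)) = p(z) at all continuity points z of p ∈ P_r, with ρ > 0 and ℓ slowly varying at infinity. Then p = B_ρ p₀ for some p₀ ∈ P_r (in particular p is differentiable), and lim_{n→∞} u(r^n z)/((r^n z)^{ρ−1} ℓ(r^n z)) = p₀(z) at all continuity points z of p₀. -/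
/-!
Write `q x = x ^ ρ * p x` and `U x = ∫₀ˣ u`. Normalising at a fixed `z` by
`wₙ = (rⁿ z) ^ (ρ - 1) ℓ(rⁿ z)`, slow variation turns the hypothesis into
`U(rⁿ x) / (rⁿ wₙ) → z ^ (1 - ρ) q x` at the continuity points of `p`, which are dense since `p` is
right-continuous (a Baire category argument). As `u` is eventually monotone, every difference
quotient of `x ↦ U(rⁿ x) / (rⁿ wₙ)` on `[a, b]` lies between `u(rⁿ a) / wₙ` and `u(rⁿ b) / wₙ`.
Passing to the limit, `q` is convex (or concave) on `(0, ∞)`, and `u(rⁿ z) / wₙ` is squeezed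
between slopes of `z ^ (1 - ρ) q` on both sides of `z`, so it converges to `z ^ (1 - ρ) g z`
wherever the right derivative `g` of `q` is continuous. Finally `q (r x) = r ^ ρ q x` pins `g x`
between two positive multiples of `q x / x`, so `p₀ x = x ^ (1 - ρ) g x` lies in `P_r`, and
`q = ∫₀ g` by the fundamental theorem of calculus.
-/

open Filter Set Real

open Topology MeasureTheory

section RightContinuous

variable {f : ℝ → ℝ}

lemma exists_Ioo_subset_forall_dist_le (hf : ∀ x, ContinuousWithinAt f (Ici x) x)
    {α β ε : ℝ} (hαβ : α < β) (hε : 0 < ε) :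
    ∃ γ δ, γ < δ ∧ Ioo γ δ ⊆ Ioo α β ∧ ∀ y ∈ Ioo γ δ, ∀ y' ∈ Ioo γ δ, dist (f y) (f y') ≤ ε := by
  set E : ℕ → Set ℝ := fun n => {x | ∀ y ∈ Icc x (x + 1 / (n + 1)), dist (f y) (f x) ≤ ε / 2}
  have hcover : ⋃ n, closure (E n) = univ := by
    refine eq_univ_of_forall fun x => mem_iUnion.2 ?_
    obtain ⟨w, hxw, hw⟩ := (nhdsGE_basis_of_exists_gt (exists_gt x)).eventually_iff.1
      (hf x (Metric.closedBall_mem_nhds (f x) (half_pos hε)))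
    obtain ⟨n, hn⟩ := exists_nat_one_div_lt (sub_pos.2 hxw)
    exact ⟨n, subset_closure fun y hy => hw ⟨hy.1, by linarith [hy.2]⟩⟩
  obtain ⟨w, hwE, hwαβ⟩ := (dense_iUnion_interior_of_closed (fun n => isClosed_closure)
    hcover).exists_mem_open isOpen_Ioo (nonempty_Ioo.2 hαβ)
  obtain ⟨n, hwn⟩ := mem_iUnion.1 hwE
  obtain ⟨γ, δ', ⟨hγ, hδ'⟩, hsub⟩ := mem_nhds_iff_exists_Ioo_subset.1
    (inter_mem (isOpen_interior.mem_nhds hwn) (isOpen_Ioo.mem_nhds hwαβ))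
  set δ := min δ' (γ + 1 / (n + 1))
  have hlen : (0 : ℝ) < 1 / (n + 1) := by positivity
  have hsub' : Ioo γ δ ⊆ Ioo γ δ' := Ioo_subset_Ioo_right (min_le_left _ _)
  refine ⟨γ, δ, lt_min (hγ.trans hδ') (by linarith), fun y hy => (hsub (hsub' hy)).2,
    fun y hy y' hy' => ?_⟩
  -- a point of `E n` to the left of both `y` and `y'` controls both values
  obtain ⟨x, hxE, hx⟩ : (E n ∩ Ioo γ (min y y')).Nonempty := by
    refine (closure_inter_open_nonempty_iff isOpen_Ioo).1 ⟨(γ + min y y') / 2, ?_, ?_⟩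
    · have hm : γ < min y y' := lt_min hy.1 hy'.1
      refine interior_subset (hsub (hsub' ⟨by linarith, ?_⟩)).1
      linarith [min_le_left y y', hy.2]
    · constructor <;> linarith [lt_min hy.1 hy'.1]
  have hδ : δ ≤ γ + 1 / (n + 1) := min_le_right _ _
  have hyx := hxE y ⟨(hx.2.trans_le (min_le_left _ _)).le, by linarith [hy.2, hx.1]⟩
  have hy'x := hxE y' ⟨(hx.2.trans_le (min_le_right _ _)).le, by linarith [hy'.2, hx.1]⟩
  linarith [dist_triangle_right (f y) (f y') (f x)]

lemma dense_setOf_continuousAt (hf : ∀ x, ContinuousWithinAt f (Ici x) x) :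
    Dense {x | ContinuousAt f x} := by
  set O : ℕ → Set ℝ := fun k => ⋃ (γ) (δ) (_ : ∀ y ∈ Ioo γ δ, ∀ y' ∈ Ioo γ δ,
    dist (f y) (f y') ≤ 1 / (k + 1)), Ioo γ δ
  have hO : Dense (⋂ k, O k) := by
    refine dense_iInter_of_isOpen_nat (fun k => isOpen_iUnion fun _ => isOpen_iUnion fun _ =>
      isOpen_iUnion fun _ => isOpen_Ioo) fun k => dense_of_exists_between fun α β hαβ => ?_
    obtain ⟨γ, δ, hγδ, hsub, hosc⟩ :=
      exists_Ioo_subset_forall_dist_le hf hαβ (by positivity : (0 : ℝ) < 1 / (k + 1))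
    have hm : (γ + δ) / 2 ∈ Ioo γ δ := ⟨by linarith, by linarith⟩
    exact ⟨_, mem_iUnion₂.2 ⟨γ, δ, mem_iUnion.2 ⟨hosc, hm⟩⟩, hsub hm⟩
  refine hO.mono fun x hx => Metric.tendsto_nhds.2 fun ε hε => ?_
  obtain ⟨k, hk⟩ := exists_nat_one_div_lt hε
  obtain ⟨γ, δ, hx⟩ := mem_iUnion₂.1 (mem_iInter.1 hx k)
  obtain ⟨hosc, hxγδ⟩ := mem_iUnion.1 hx
  filter_upwards [Ioo_mem_nhds hxγδ.1 hxγδ.2] with y hy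
  exact (hosc y hy x hxγδ).trans_lt hk

end RightContinuous

lemma exists_continuousAt_mem_Ioo {p : ℝ → ℝ} (hp : ∀ x > 0, ContinuousWithinAt p (Ici x) x)
    {a b : ℝ} (ha : 0 < a) (hab : a < b) : ∃ t ∈ Ioo a b, ContinuousAt p t := by
  have hf : ∀ x, ContinuousWithinAt (fun t => p (max t a)) (Ici x) x := fun x =>
    (hp (max x a) (ha.trans_le (le_max_right _ _))).comp (f := fun t => max t a)
      (continuous_id.max continuous_const).continuousWithinAt
      fun t (ht : x ≤ t) => max_le_max ht le_rfl
  obtain ⟨t, ht, hat, htb⟩ := (dense_setOf_continuousAt hf).exists_between hab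
  have ht' : ContinuousAt (fun t => p (max t a)) t := ht
  refine ⟨t, ⟨hat, htb⟩, ht'.congr ?_⟩
  filter_upwards [Ioi_mem_nhds hat] with s hs
  rw [max_eq_left hs.le]

lemma continuousWithinAt_slope {G : ℝ → ℝ} {s : Set ℝ} {c x : ℝ}
    (hG : ContinuousWithinAt G s x) (hx : x ≠ c) : ContinuousWithinAt (slope G c) s x := by
  simp only [slope_fun_def_field]
  exact (hG.sub continuousWithinAt_const).div (continuousWithinAt_id.sub continuousWithinAt_const)
    (sub_ne_zero.2 hx)

lemma Filter.Tendsto.slope_apply {α : Type*} {L : Filter α} {F : α → ℝ → ℝ} {G : ℝ → ℝ}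
    {a b : ℝ} (ha : Tendsto (F · a) L (𝓝 (G a))) (hb : Tendsto (F · b) L (𝓝 (G b))) :
    Tendsto (fun i => slope (F i) a b) L (𝓝 (slope G a b)) := by
  simp only [slope_def_field]
  exact (hb.sub ha).div_const _

section SlopeSandwich

variable {f F : ℕ → ℝ → ℝ} {G : ℝ → ℝ} {D : Set ℝ}

lemma le_of_forall_mem_Ioo_le (hD : ∀ a b, 0 < a → a < b → ∃ t ∈ Ioo a b, t ∈ D)
    {φ ψ : ℝ → ℝ} {x b : ℝ} (hx : 0 < x) (hxb : x < b) (hφ : ContinuousWithinAt φ (Ici x) x)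
    (hψ : ContinuousWithinAt ψ (Ici x) x) (h : ∀ y ∈ Ioo x b, y ∈ D → φ y ≤ ψ y) :
    φ x ≤ ψ x := by
  have hcl : x ∈ closure (Ioo x b ∩ D) := Metric.mem_closure_iff.2 fun ε hε => by
    obtain ⟨t, ht, htD⟩ := hD x (min b (x + ε)) hx (lt_min hxb (by linarith))
    refine ⟨t, ⟨⟨ht.1, ht.2.trans_le (min_le_left _ _)⟩, htD⟩, ?_⟩
    rw [Real.dist_eq, abs_sub_lt_iff]
    constructor <;> linarith [ht.1, ht.2.trans_le (min_le_right _ _)]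
  have hsub : Ioo x b ∩ D ⊆ Ici x := fun y hy => hy.1.1.le
  exact ContinuousWithinAt.closure_le hcl (hφ.mono hsub) (hψ.mono hsub) fun y hy => h y hy.1 hy.2

lemma convexOn_Ioi_of_slope_le_of_mem (hD : ∀ a b, 0 < a → a < b → ∃ t ∈ Ioo a b, t ∈ D)
    (hG : ∀ x > 0, ContinuousWithinAt G (Ici x) x)
    (h : ∀ a b c, 0 < a → a < b → b < c → a ∈ D → b ∈ D → c ∈ D → slope G a b ≤ slope G b c) :
    ConvexOn ℝ (Ioi 0) G := by
  have hslope : ∀ {c x}, 0 < x → x ≠ c → ContinuousWithinAt (fun t => slope G t c) (Ici x) x :=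
    fun hx hxc => by simpa only [slope_comm G] using continuousWithinAt_slope (hG _ hx) hxc
  -- relax the membership in `D` one variable at a time, from right to left
  have hc : ∀ a b c, 0 < a → a < b → b < c → a ∈ D → b ∈ D → slope G a b ≤ slope G b c :=
    fun a b c ha hab hbc haD hbD => le_of_forall_mem_Ioo_le hD (ha.trans (hab.trans hbc))
      (lt_add_one c) continuousWithinAt_const
      (continuousWithinAt_slope (hG c (by linarith)) hbc.ne')
      fun y hy hyD => h a b y ha hab (hbc.trans hy.1) haD hbD hyD
  have hb : ∀ a b c, 0 < a → a < b → b < c → a ∈ D → slope G a b ≤ slope G b c :=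
    fun a b c ha hab hbc haD => le_of_forall_mem_Ioo_le hD (ha.trans hab) hbc
      (continuousWithinAt_slope (hG b (ha.trans hab)) hab.ne') (hslope (ha.trans hab) hbc.ne)
      fun y hy hyD => hc a y c ha (hab.trans hy.1) hy.2 haD hyD
  refine convexOn_iff_slope_mono_adjacent.2 ⟨convex_Ioi 0, fun a c b ha _ hab hbc => ?_⟩
  simp only [← slope_def_field]
  exact le_of_forall_mem_Ioo_le hD ha hab (hslope ha hab.ne) continuousWithinAt_const
    fun y hy hyD => hb y c b (ha.trans hy.1) hy.2 hbc hyD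

lemma slope_le_slope_of_sandwich
    (hsand : ∀ a b, 0 < a → a < b → ∀ᶠ n in atTop, slope (F n) a b ∈ Icc (f n a) (f n b))
    (hF : ∀ x > 0, x ∈ D → Tendsto (F · x) atTop (𝓝 (G x)))
    {a b c : ℝ} (ha : 0 < a) (hab : a < b) (hbc : b < c) (haD : a ∈ D) (hbD : b ∈ D)
    (hcD : c ∈ D) : slope G a b ≤ slope G b c := by
  have hb := ha.trans hab
  refine le_of_tendsto_of_tendsto ((hF a ha haD).slope_apply (hF b hb hbD))
    ((hF b hb hbD).slope_apply (hF c (hb.trans hbc) hcD)) ?_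
  filter_upwards [hsand a b ha hab, hsand b c hb hbc] with n h₁ h₂ using h₁.2.trans h₂.1

lemma tendsto_rightDeriv_of_sandwich (hD : ∀ a b, 0 < a → a < b → ∃ t ∈ Ioo a b, t ∈ D)
    (hsand : ∀ a b, 0 < a → a < b → ∀ᶠ n in atTop, slope (F n) a b ∈ Icc (f n a) (f n b))
    (hF : ∀ x > 0, x ∈ D → Tendsto (F · x) atTop (𝓝 (G x))) (hG : ConvexOn ℝ (Ioi 0) G)
    {z : ℝ} (hz : 0 < z) (hg : ContinuousAt (fun x => derivWithin G (Ioi x) x) z) :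
    Tendsto (f · z) atTop (𝓝 (derivWithin G (Ioi z) z)) := by
  have hint : ∀ {x : ℝ}, 0 < x → x ∈ interior (Ioi (0 : ℝ)) := fun hx => by rwa [interior_Ioi]
  refine tendsto_order.2 ⟨fun m hm => ?_, fun m hm => ?_⟩
  · obtain ⟨l, hlz, hl⟩ := mem_nhdsLT_iff_exists_Ioo_subset.1
      (nhdsWithin_le_nhds (hg.eventually (lt_mem_nhds hm)))
    obtain ⟨a', ha', ha'D⟩ := hD (max l (z / 2)) z (by positivity) (max_lt hlz (by linarith))
    have ha'0 : 0 < a' := (half_pos hz).trans_le (le_max_right _ _) |>.trans ha'.1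
    obtain ⟨a, ha, haD⟩ := hD a' z ha'0 ha'.2
    have hlt : m < slope G a' a := (hl ⟨(le_max_left _ _).trans_lt ha'.1, ha'.2⟩).trans_le
      (hG.rightDeriv_le_slope_of_mem_interior (hint ha'0) (ha'0.trans ha.1) ha.1)
    filter_upwards [((hF a' ha'0 ha'D).slope_apply (hF a (ha'0.trans ha.1) haD)).eventually
      (lt_mem_nhds hlt), hsand a' a ha'0 ha.1, hsand a z (ha'0.trans ha.1) ha.2]
      with n h₀ h₁ h₂ using h₀.trans_le (h₁.2.trans (h₂.1.trans h₂.2))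
  · obtain ⟨u, hzu, hu⟩ := mem_nhdsGT_iff_exists_Ioo_subset.1
      (nhdsWithin_le_nhds (hg.eventually (gt_mem_nhds hm)))
    obtain ⟨b, hb, hbD⟩ := hD z u hz hzu
    obtain ⟨c, hc, hcD⟩ := hD b u (hz.trans hb.1) hb.2
    have hb0 := hz.trans hb.1
    have hlt : slope G b c < m :=
      ((hG.slope_le_leftDeriv_of_mem_interior hb0 (hint (hb0.trans hc.1)) hc.1).trans
        (hG.leftDeriv_le_rightDeriv_of_mem_interior (hint (hb0.trans hc.1)))).trans_lt
        (hu ⟨hb.1.trans hc.1, hc.2⟩)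
    filter_upwards [((hF b hb0 hbD).slope_apply (hF c (hb0.trans hc.1) hcD)).eventually
      (gt_mem_nhds hlt), hsand z b hz hb.1, hsand b c hb0 hc.1]
      with n h₀ h₁ h₂ using (h₁.1.trans (h₁.2.trans h₂.1)).trans_lt h₀

end SlopeSandwich

lemma SlowlyVarying.tendsto_div_mul {l : ℝ → ℝ} (hl : SlowlyVarying l) {α : Type*}
    {L : Filter α} {t : α → ℝ} (ht : Tendsto t L atTop) {a b : ℝ} (ha : 0 < a) (hb : 0 < b) :
    Tendsto (fun i => l (t i * a) / l (t i * b)) L (𝓝 1) := by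
  have h := ((hl.2 a ha).comp ht).div ((hl.2 b hb).comp ht) one_ne_zero
  rw [div_one] at h
  refine h.congr' ?_
  filter_upwards [ht.eventually hl.1] with i hi
  simp only [Pi.div_apply, Function.comp_apply, mul_comm _ (t i)]
  field_simp

lemma SlowlyVarying.tendsto_div_rpow_mul {l : ℝ → ℝ} (hl : SlowlyVarying l) {t φ : ℕ → ℝ}
    (ht : Tendsto t atTop atTop) {ρ x z P : ℝ} (hx : 0 < x) (hz : 0 < z)
    (hφ : Tendsto (fun n => φ n / ((t n * x) ^ ρ * l (t n * x))) atTop (𝓝 P)) :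
    Tendsto (fun n => φ n / (t n * ((t n * z) ^ (ρ - 1) * l (t n * z)))) atTop
      (𝓝 (z ^ (1 - ρ) * (x ^ ρ * P))) := by
  have h := (hφ.mul (hl.tendsto_div_mul ht hx hz)).const_mul (z ^ (1 - ρ) * x ^ ρ)
  rw [mul_one] at h
  rw [← mul_assoc]
  refine h.congr' ?_
  filter_upwards [ht.eventually_gt_atTop 0, (ht.atTop_mul_const hx).eventually hl.1,
    (ht.atTop_mul_const hz).eventually hl.1] with n htn hlx hlz
  rw [mul_rpow htn.le hx.le, mul_rpow htn.le hz.le, rpow_sub_one htn.ne',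
    show 1 - ρ = -(ρ - 1) by ring, rpow_neg hz.le]
  have := rpow_pos_of_pos htn ρ
  have := rpow_pos_of_pos hx ρ
  have := rpow_pos_of_pos hz (ρ - 1)
  field_simp

lemma MonotoneOn.slope_integral_mem_Icc {u : ℝ → ℝ} {A B : ℝ} (hu : MonotoneOn u (Icc A B))
    (hA : 0 ≤ A) (hAB : A < B) (huint : ∀ x, IntegrableOn u (Icc 0 x)) :
    slope (fun x => ∫ y in (0 : ℝ)..x, u y) A B ∈ Icc (u A) (u B) := by
  have hint : ∀ x, 0 ≤ x → IntervalIntegrable u volume 0 x := fun x hx =>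
    IntegrableOn.intervalIntegrable (by rw [uIcc_of_le hx]; exact huint x)
  have hAB' : IntervalIntegrable u volume A B := (uIcc_of_le hAB.le ▸ hu).intervalIntegrable
  rw [slope_def_field, intervalIntegral.integral_interval_sub_left (hint B (hA.trans hAB.le))
    (hint A hA), mem_Icc, le_div_iff₀ (sub_pos.2 hAB), div_le_iff₀ (sub_pos.2 hAB)]
  constructor
  · simpa [mul_comm] using intervalIntegral.integral_mono_on hAB.le intervalIntegrable_const hAB'
      fun y hy => hu (left_mem_Icc.2 hAB.le) hy hy.1
  · simpa [mul_comm] using intervalIntegral.integral_mono_on hAB.le hAB' intervalIntegrable_const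
      fun y hy => hu hy (right_mem_Icc.2 hAB.le) hy.2

lemma slope_comp_mul_div {φ : ℝ → ℝ} {t : ℝ} (ht : t ≠ 0) (w a b : ℝ) :
    slope (fun x => φ (t * x) / (t * w)) a b = slope φ (t * a) (t * b) / w := by
  simp only [slope_def_field, ← mul_sub]
  rcases eq_or_ne (b - a) 0 with h | h
  · simp [h]
  rcases eq_or_ne w 0 with hw | hw
  · simp [hw]
  field_simp

lemma eventually_slope_sandwich_of_monotoneOn {u : ℝ → ℝ} {x₀ r : ℝ} {w : ℕ → ℝ} (hr : 1 < r)
    (hu : MonotoneOn u (Ici x₀)) (huint : ∀ x, IntegrableOn u (Icc 0 x))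
    (hw : ∀ᶠ n in atTop, 0 < w n) {a b : ℝ} (ha : 0 < a) (hab : a < b) :
    ∀ᶠ n in atTop, slope (fun x => (∫ y in (0 : ℝ)..r ^ n * x, u y) / (r ^ n * w n)) a b ∈
      Icc (u (r ^ n * a) / w n) (u (r ^ n * b) / w n) := by
  filter_upwards [hw,
    ((tendsto_pow_atTop_atTop_of_one_lt hr).atTop_mul_const ha).eventually_ge_atTop x₀]
    with n hwn hn
  have hrn : 0 < r ^ n := pow_pos (by linarith) n
  rw [slope_comp_mul_div (φ := fun x => ∫ y in (0 : ℝ)..x, u y) hrn.ne']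
  have h := (hu.mono fun y hy => hn.trans hy.1).slope_integral_mem_Icc (mul_pos hrn ha).le
    (mul_lt_mul_of_pos_left hab hrn) huint
  exact ⟨div_le_div_of_nonneg_right h.1 hwn.le, div_le_div_of_nonneg_right h.2 hwn.le⟩

theorem convexOn_and_tendsto_of_monotoneOn {u p l : ℝ → ℝ} {r ρ x₀ : ℝ} {D : Set ℝ}
    (hr : 1 < r) (hl : SlowlyVarying l) (hu : MonotoneOn u (Ici x₀))
    (huint : ∀ x, IntegrableOn u (Icc 0 x))
    (hD : ∀ a b, 0 < a → a < b → ∃ t ∈ Ioo a b, t ∈ D)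
    (hp : ∀ x > 0, ContinuousWithinAt p (Ici x) x)
    (hlim : ∀ x > 0, x ∈ D → Tendsto (fun n : ℕ =>
      (∫ y in (0 : ℝ)..r ^ n * x, u y) / ((r ^ n * x) ^ ρ * l (r ^ n * x))) atTop (𝓝 (p x))) :
    ConvexOn ℝ (Ioi 0) (fun x => x ^ ρ * p x) ∧
      ∀ z > 0, ContinuousAt (fun x => derivWithin (fun y => y ^ ρ * p y) (Ioi x) x) z →
        Tendsto (fun n : ℕ => u (r ^ n * z) / ((r ^ n * z) ^ (ρ - 1) * l (r ^ n * z))) atTop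
          (𝓝 (z ^ (1 - ρ) * derivWithin (fun y => y ^ ρ * p y) (Ioi z) z)) := by
  set q : ℝ → ℝ := fun x => x ^ ρ * p x
  have hrn := tendsto_pow_atTop_atTop_of_one_lt hr
  have hw : ∀ z > 0, ∀ᶠ n in atTop, 0 < (r ^ n * z) ^ (ρ - 1) * l (r ^ n * z) := fun z hz => by
    filter_upwards [(hrn.atTop_mul_const hz).eventually hl.1, hrn.eventually_gt_atTop 0]
      with n hln hrn using mul_pos (rpow_pos_of_pos (mul_pos hrn hz) _) hln
  -- normalised by `wₙ = (rⁿ z) ^ (ρ - 1) ℓ(rⁿ z)`, the primitives converge to `z ^ (1 - ρ) * q`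
  have hsand := fun z (hz : 0 < z) a b (ha : 0 < a) (hab : a < b) =>
    eventually_slope_sandwich_of_monotoneOn hr hu huint (hw z hz) ha hab
  have hF := fun z (hz : 0 < z) x (hx : 0 < x) (hxD : x ∈ D) =>
    hl.tendsto_div_rpow_mul hrn hx hz (hlim x hx hxD)
  have hconv : ConvexOn ℝ (Ioi 0) q := by
    refine convexOn_Ioi_of_slope_le_of_mem hD
      (fun x hx => (continuousAt_rpow_const x ρ (Or.inl hx.ne')).continuousWithinAt.mul (hp x hx))
      fun a b c ha hab hbc haD hbD hcD => ?_
    simpa using slope_le_slope_of_sandwich (hsand 1 one_pos) (hF 1 one_pos) ha hab hbc haD hbD hcD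
  refine ⟨hconv, fun z hz hg => ?_⟩
  have hg' : ContinuousAt (fun x => derivWithin (fun y => z ^ (1 - ρ) * q y) (Ioi x) x) z := by
    simpa only [derivWithin_const_mul_field] using continuousAt_const.fun_mul hg
  have h := tendsto_rightDeriv_of_sandwich hD (hsand z hz) (hF z hz)
    (hconv.smul (rpow_pos_of_pos hz _).le) hz hg'
  rwa [derivWithin_const_mul_field] at h

theorem concaveOn_and_tendsto_of_antitoneOn {u p l : ℝ → ℝ} {r ρ x₀ : ℝ} {D : Set ℝ}
    (hr : 1 < r) (hl : SlowlyVarying l) (hu : AntitoneOn u (Ici x₀))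
    (huint : ∀ x, IntegrableOn u (Icc 0 x))
    (hD : ∀ a b, 0 < a → a < b → ∃ t ∈ Ioo a b, t ∈ D)
    (hp : ∀ x > 0, ContinuousWithinAt p (Ici x) x)
    (hlim : ∀ x > 0, x ∈ D → Tendsto (fun n : ℕ =>
      (∫ y in (0 : ℝ)..r ^ n * x, u y) / ((r ^ n * x) ^ ρ * l (r ^ n * x))) atTop (𝓝 (p x))) :
    ConcaveOn ℝ (Ioi 0) (fun x => x ^ ρ * p x) ∧
      ∀ z > 0, ContinuousAt (fun x => derivWithin (fun y => y ^ ρ * p y) (Ioi x) x) z →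
        Tendsto (fun n : ℕ => u (r ^ n * z) / ((r ^ n * z) ^ (ρ - 1) * l (r ^ n * z))) atTop
          (𝓝 (z ^ (1 - ρ) * derivWithin (fun y => y ^ ρ * p y) (Ioi z) z)) := by
  have hneg : (fun x => x ^ ρ * -p x) = -fun x => x ^ ρ * p x := by
    ext x
    simp
  obtain ⟨hconv, htend⟩ := convexOn_and_tendsto_of_monotoneOn (u := fun x => -u x)
    (p := fun x => -p x) hr hl hu.neg (fun x => (huint x).neg) hD (fun x hx => (hp x hx).neg)
    fun x hx hxD => by
      simpa only [intervalIntegral.integral_neg, neg_div] using (hlim x hx hxD).neg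
  rw [hneg] at hconv htend
  refine ⟨neg_convexOn_iff.1 hconv, fun z hz hg => ?_⟩
  simpa only [derivWithin.neg, mul_neg, neg_div, neg_neg] using
    (htend z hz (by simpa only [derivWithin.neg] using hg.fun_neg)).neg

theorem UltimatelyMonotone.convexOn_or_concaveOn_and_tendsto {u p l : ℝ → ℝ} {r ρ : ℝ}
    {D : Set ℝ} (humon : UltimatelyMonotone u) (hr : 1 < r) (hl : SlowlyVarying l)
    (huint : ∀ x, IntegrableOn u (Icc 0 x))
    (hD : ∀ a b, 0 < a → a < b → ∃ t ∈ Ioo a b, t ∈ D)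
    (hp : ∀ x > 0, ContinuousWithinAt p (Ici x) x)
    (hlim : ∀ x > 0, x ∈ D → Tendsto (fun n : ℕ =>
      (∫ y in (0 : ℝ)..r ^ n * x, u y) / ((r ^ n * x) ^ ρ * l (r ^ n * x))) atTop (𝓝 (p x))) :
    (ConvexOn ℝ (Ioi 0) (fun x => x ^ ρ * p x) ∨ ConcaveOn ℝ (Ioi 0) (fun x => x ^ ρ * p x)) ∧
      ∀ z > 0, ContinuousAt (fun x => derivWithin (fun y => y ^ ρ * p y) (Ioi x) x) z →
        Tendsto (fun n : ℕ => u (r ^ n * z) / ((r ^ n * z) ^ (ρ - 1) * l (r ^ n * z))) atTop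
          (𝓝 (z ^ (1 - ρ) * derivWithin (fun y => y ^ ρ * p y) (Ioi z) z)) := by
  obtain ⟨x₀, hmono | hanti⟩ := humon
  · exact (convexOn_and_tendsto_of_monotoneOn hr hl hmono huint hD hp hlim).imp_left Or.inl
  · exact (concaveOn_and_tendsto_of_antitoneOn hr hl hanti huint hD hp hlim).imp_left Or.inr

section RightDeriv

variable {S : Set ℝ} {f : ℝ → ℝ} {x : ℝ}

lemma ConvexOn.continuousWithinAt_rightDeriv (hf : ConvexOn ℝ S f) (hx : x ∈ interior S) :
    ContinuousWithinAt (fun y => derivWithin f (Ioi y) y) (Ici x) x := by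
  have hint : ∀ {s : Set ℝ}, ∀ᶠ y in 𝓝[s] x, y ∈ interior S :=
    nhdsWithin_le_nhds (isOpen_interior.mem_nhds hx)
  have hS : ∀ᶠ y in 𝓝[Ici x] x, y ∈ interior S ∧ x ≤ y := hint.and eventually_mem_nhdsWithin
  refine tendsto_order.2 ⟨fun m hm => ?_, fun m hm => ?_⟩
  · filter_upwards [hS] with y hy using hm.trans_le (hf.monotoneOn_rightDeriv hx hy.1 hy.2)
  -- `g y ≤ slope f y t`, and the right side is continuous in `y` and close to `g x` for `t ↓ x`
  obtain ⟨m', hm'⟩ := exists_between hm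
  have hslope : Tendsto (slope f x) (𝓝[>] x) (𝓝 (derivWithin f (Ioi x) x)) := by
    simpa [hasDerivWithinAt_iff_tendsto_slope] using
      hf.hasDerivWithinAt_rightDeriv_of_mem_interior hx
  obtain ⟨t, ⟨hxt, htS⟩, ht⟩ := ((eventually_mem_nhdsWithin.and hint).and
    (hslope.eventually (gt_mem_nhds hm'.1))).exists
  have hcont : ContinuousAt (fun y => slope f y t) x := by
    simpa only [slope_comm f _ t, continuousWithinAt_univ] using
      continuousWithinAt_slope (s := univ) (hf.continuousOn_interior.continuousAt
        (isOpen_interior.mem_nhds hx)).continuousWithinAt (ne_of_lt hxt)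
  filter_upwards [hS, nhdsWithin_le_nhds (hcont.eventually (gt_mem_nhds (ht.trans hm'.2))),
    nhdsWithin_le_nhds (Iio_mem_nhds hxt)] with y hy hyt hyt'
  exact (hf.rightDeriv_le_slope_of_mem_interior hy.1 (interior_subset htS) hyt').trans_lt hyt

lemma ConcaveOn.continuousWithinAt_rightDeriv (hf : ConcaveOn ℝ S f) (hx : x ∈ interior S) :
    ContinuousWithinAt (fun y => derivWithin f (Ioi y) y) (Ici x) x := by
  simpa only [derivWithin.neg, neg_neg] using (hf.neg.continuousWithinAt_rightDeriv hx).fun_neg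

lemma ConcaveOn.hasDerivWithinAt_rightDeriv_of_mem_interior (hf : ConcaveOn ℝ S f)
    (hx : x ∈ interior S) : HasDerivWithinAt f (derivWithin f (Ioi x) x) (Ioi x) x := by
  simpa only [derivWithin.neg, neg_neg, Pi.neg_apply] using
    (hf.neg.hasDerivWithinAt_rightDeriv_of_mem_interior hx).neg

lemma ConvexOn.rightDeriv_mem_uIcc_slope (hf : ConvexOn ℝ S f) {a b : ℝ} (ha : a ∈ S)
    (hx : x ∈ interior S) (hb : b ∈ S) (hax : a < x) (hxb : x < b) :
    derivWithin f (Ioi x) x ∈ uIcc (slope f a x) (slope f x b) :=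
  mem_uIcc.2 <| Or.inl ⟨(hf.slope_le_leftDeriv_of_mem_interior ha hx hax).trans
    (hf.leftDeriv_le_rightDeriv_of_mem_interior hx),
    hf.rightDeriv_le_slope_of_mem_interior hx hb hxb⟩

lemma ConcaveOn.rightDeriv_mem_uIcc_slope (hf : ConcaveOn ℝ S f) {a b : ℝ} (ha : a ∈ S)
    (hx : x ∈ interior S) (hb : b ∈ S) (hax : a < x) (hxb : x < b) :
    derivWithin f (Ioi x) x ∈ uIcc (slope f a x) (slope f x b) := by
  simpa only [derivWithin.neg, slope_neg_fun, Pi.neg_apply, neg_neg] using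
    Antitone.mapsTo_uIcc (f := fun y : ℝ => -y) (fun _ _ h => neg_le_neg h)
      (hf.neg.rightDeriv_mem_uIcc_slope ha hx hb hax hxb)

end RightDeriv

lemma mul_rightDeriv_mul_eq {f : ℝ → ℝ} {c k x : ℝ} (hc : 0 < c) (hx : 0 < x)
    (hf : ∀ y > 0, f (c * y) = k * f y) :
    c * derivWithin f (Ioi (c * x)) (c * x) = k * derivWithin f (Ioi x) x := by
  have h := derivWithin_comp_mul_left c f (Ioi x) x
  rw [LinearOrderedField.smul_Ioi hc, smul_eq_mul] at h
  rw [← h, derivWithin_congr (s := Ioi x) (f := fun y => k * f y)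
    (fun y hy => hf y (hx.trans hy)) (hf x hx), derivWithin_const_mul_field]

lemma rpow_one_sub_mul_slope {p : ℝ → ℝ} {ρ c x : ℝ} (hc : 0 < c) (hx : 0 < x)
    (hp : p (c * x) = p x) :
    x ^ (1 - ρ) * slope (fun t => t ^ ρ * p t) x (c * x) = (c ^ ρ - 1) / (c - 1) * p x := by
  rcases eq_or_ne c 1 with rfl | hc1
  · simp
  have hc1' : c - 1 ≠ 0 := sub_ne_zero.2 hc1
  rw [slope_def_field, hp, mul_rpow hc.le hx.le, rpow_sub hx, rpow_one,
    show c * x - x = (c - 1) * x by ring]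
  have := rpow_pos_of_pos hx ρ
  field_simp

lemma rpow_sub_one_div_sub_one_pos {c ρ : ℝ} (hc : 0 < c) (hc1 : c ≠ 1) (hρ : 0 < ρ) :
    0 < (c ^ ρ - 1) / (c - 1) := by
  rcases hc1.lt_or_gt with h | h
  · exact div_pos_of_neg_of_neg (sub_neg.2 (rpow_lt_one hc.le h hρ)) (sub_neg.2 h)
  · exact div_pos (sub_pos.2 (one_lt_rpow h hρ)) (sub_pos.2 h)

lemma memP_of_le_of_le {r : ℝ} {p p₀ : ℝ → ℝ} (hp : MemP r p) {c C : ℝ} (hc : 0 < c)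
    (hbound : ∀ x > 0, c * p x ≤ p₀ x ∧ p₀ x ≤ C * p x)
    (hrc : ∀ x > 0, ContinuousWithinAt p₀ (Ici x) x) (hper : ∀ x > 0, p₀ (x * r) = p₀ x) :
    MemP r p₀ := by
  obtain ⟨hpos, ⟨M, hM⟩, -, ⟨c', hc', hc'r⟩, -⟩ := hp
  have hC : 0 < C := hc.trans_le <| le_of_mul_le_mul_right
    ((hbound 1 one_pos).1.trans (hbound 1 one_pos).2) (hpos 1 one_pos)
  refine ⟨fun x hx => (mul_pos hc (hpos x hx)).trans_le (hbound x hx).1,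
    ⟨C * M, fun x hx => (hbound x hx).2.trans (mul_le_mul_of_nonneg_left (hM x hx) hC.le)⟩, hrc,
    ⟨c * c', mul_pos hc hc', fun x hx => ?_⟩, hper⟩
  exact (mul_le_mul_of_nonneg_left (hc'r x hx) hc.le).trans
    (hbound x (one_pos.trans_le hx.1)).1

lemma MemP.memP_rpow_mul_rightDeriv {r ρ : ℝ} {p : ℝ → ℝ} (hp : MemP r p) (hr : 1 < r)
    (hρ : 0 < ρ)
    (hq : ConvexOn ℝ (Ioi 0) (fun x => x ^ ρ * p x) ∨ ConcaveOn ℝ (Ioi 0) (fun x => x ^ ρ * p x)) :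
    MemP r (fun x => x ^ (1 - ρ) * derivWithin (fun y => y ^ ρ * p y) (Ioi x) x) := by
  set q : ℝ → ℝ := fun x => x ^ ρ * p x
  have hr0 : 0 < r := by linarith
  have hint : ∀ {x : ℝ}, 0 < x → x ∈ interior (Ioi (0 : ℝ)) := fun hx => by rwa [interior_Ioi]
  have hper : ∀ x > 0, p (r * x) = p x := fun x hx => by rw [mul_comm]; exact hp.2.2.2.2 x hx
  have hper' : ∀ x > 0, p (r⁻¹ * x) = p x := fun x hx => by
    rw [← hper _ (by positivity), mul_inv_cancel_left₀ hr0.ne']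
  set κ₁ := ((r⁻¹) ^ ρ - 1) / (r⁻¹ - 1)
  set κ₂ := (r ^ ρ - 1) / (r - 1)
  refine memP_of_le_of_le hp (c := min κ₁ κ₂) (C := max κ₁ κ₂)
    (lt_min (rpow_sub_one_div_sub_one_pos (by positivity) (inv_ne_one.2 hr.ne') hρ)
      (rpow_sub_one_div_sub_one_pos hr0 hr.ne' hρ)) (fun x hx => ?_) (fun x hx => ?_)
    (fun x hx => ?_)
  · have hg : derivWithin q (Ioi x) x ∈ uIcc (slope q (r⁻¹ * x) x) (slope q x (r * x)) := by
      have hrx : x < r * x := lt_mul_of_one_lt_left hx hr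
      have hrx' : r⁻¹ * x < x := by rwa [inv_mul_lt_iff₀ hr0]
      rcases hq with hq | hq <;> exact hq.rightDeriv_mem_uIcc_slope
        (show 0 < r⁻¹ * x by positivity) (hint hx) (show 0 < r * x by positivity) hrx' hrx
    have h := (monotone_mul_left_of_nonneg (rpow_nonneg hx.le (1 - ρ))).mapsTo_uIcc hg
    rw [slope_comm, rpow_one_sub_mul_slope (by positivity) hx (hper' x hx),
      rpow_one_sub_mul_slope hr0 hx (hper x hx)] at h
    have hpx := (hp.1 x hx).le
    exact ⟨(min_mul_of_nonneg _ _ hpx).trans_le h.1, h.2.trans (max_mul_of_nonneg _ _ hpx).ge⟩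
  · refine (continuousAt_rpow_const x (1 - ρ) (Or.inl hx.ne')).continuousWithinAt.mul ?_
    rcases hq with hq | hq <;> exact hq.continuousWithinAt_rightDeriv (hint hx)
  · have hs := mul_rightDeriv_mul_eq hr0 hx (f := q) (k := r ^ ρ) fun y hy => by
      simp only [q, hper y hy, mul_rpow hr0.le hy.le]
      ring
    rw [mul_comm x r, mul_rpow hr0.le hx.le, rpow_sub hr0, rpow_one]
    have := rpow_pos_of_pos hr0 ρ
    field_simp
    linear_combination hs

lemma continuousWithinAt_rpow_mul_zero {p : ℝ → ℝ} {ρ M : ℝ} (hρ : 0 < ρ)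
    (hp : ∀ x > 0, |p x| ≤ M) : ContinuousWithinAt (fun x => x ^ ρ * p x) (Ici 0) 0 := by
  rw [← continuousWithinAt_Ioi_iff_Ici, ContinuousWithinAt, zero_rpow hρ.ne', zero_mul]
  refine Tendsto.zero_mul_isBoundedUnder_le ?_ (isBoundedUnder_of_eventually_le
    (a := M) (eventually_mem_nhdsWithin.mono fun x hx => hp x hx))
  have h := (continuousAt_rpow_const 0 ρ (Or.inr hρ.le)).tendsto.mono_left
    (nhdsWithin_le_nhds (s := Ioi 0))
  rwa [zero_rpow hρ.ne'] at h

lemma MemP.eq_rpow_neg_mul_integral {r ρ : ℝ} {p : ℝ → ℝ} (hp : MemP r p) (hρ : 0 < ρ)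
    (hq : ConvexOn ℝ (Ioi 0) (fun x => x ^ ρ * p x) ∨ ConcaveOn ℝ (Ioi 0) (fun x => x ^ ρ * p x))
    (hpos : ∀ y > 0, 0 < y ^ (1 - ρ) * derivWithin (fun y => y ^ ρ * p y) (Ioi y) y)
    {x : ℝ} (hx : 0 < x) :
    p x = x ^ (-ρ) * ∫ y in (0 : ℝ)..x,
      y ^ (ρ - 1) * (y ^ (1 - ρ) * derivWithin (fun y => y ^ ρ * p y) (Ioi y) y) := by
  set q : ℝ → ℝ := fun x => x ^ ρ * p x
  obtain ⟨M, hM⟩ := hp.2.1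
  have hcont : ContinuousOn q (Icc 0 x) := by
    intro y hy
    rcases hy.1.eq_or_lt with rfl | hy0
    · exact (continuousWithinAt_rpow_mul_zero hρ (fun y hy => (abs_of_pos (hp.1 y hy)).trans_le
        (hM y hy))).mono Icc_subset_Ici_self
    · have hq' : ContinuousOn q (Ioi 0) := by
        rcases hq with hq | hq <;> exact hq.continuousOn isOpen_Ioi
      exact (hq'.continuousAt (Ioi_mem_nhds hy0)).continuousWithinAt
  have hderiv : ∀ y ∈ Ioo 0 x, HasDerivWithinAt q (derivWithin q (Ioi y) y) (Ioi y) y := by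
    intro y hy
    have hy' : y ∈ interior (Ioi (0 : ℝ)) := by rw [interior_Ioi]; exact hy.1
    rcases hq with hq | hq <;> exact hq.hasDerivWithinAt_rightDeriv_of_mem_interior hy'
  have hnonneg : ∀ y ∈ Ioo 0 x, 0 ≤ derivWithin q (Ioi y) y := fun y hy =>
    (pos_of_mul_pos_right (hpos y hy.1) (rpow_nonneg hy.1.le _)).le
  have hFTC := intervalIntegral.integral_eq_sub_of_hasDeriv_right_of_le hx.le hcont hderiv
    ((intervalIntegrable_iff_integrableOn_Ioc_of_le hx.le).2
      (intervalIntegral.integrableOn_deriv_right_of_nonneg hcont hderiv hnonneg))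
  rw [intervalIntegral.integral_congr_ae (g := fun y => derivWithin q (Ioi y) y)
    (ae_of_all _ fun y hy => ?_), hFTC]
  · simp only [q, zero_rpow hρ.ne', zero_mul, sub_zero, ← mul_assoc, ← rpow_add hx,
      neg_add_cancel, rpow_zero, one_mul]
  · rw [uIoc_of_le hx.le] at hy
    rw [← mul_assoc, ← rpow_add hy.1, sub_add_sub_cancel', sub_self, rpow_zero, one_mul]

theorem statement_16_general (u p : ℝ → ℝ) (r ρ : ℝ) (l : ℝ → ℝ)
    (hr : 1 < r) (hρ : 0 < ρ) (hl : SlowlyVarying l)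
    (huint : ∀ x : ℝ, MeasureTheory.IntegrableOn u (Set.Icc 0 x))
    (humon : UltimatelyMonotone u)
    (hp : MemP r p)
    (hlim : ∀ z > (0:ℝ), ContinuousAt p z →
      Filter.Tendsto
        (fun n : ℕ =>
          (∫ y in (0:ℝ)..(r^n * z), u y) / ((r^n * z) ^ ρ * l (r^n * z)))
        Filter.atTop (nhds (p z))) :
    ∃ p₀ : ℝ → ℝ, MemP r p₀ ∧
      (∀ x > (0:ℝ), p x = x ^ (-ρ) * ∫ y in (0:ℝ)..x, y ^ (ρ - 1) * p₀ y) ∧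
      ∀ z > (0:ℝ), ContinuousAt p₀ z →
        Filter.Tendsto
          (fun n : ℕ => u (r^n * z) / ((r^n * z) ^ (ρ - 1) * l (r^n * z)))
          Filter.atTop (nhds (p₀ z)) := by
  obtain ⟨hq, hu⟩ := humon.convexOn_or_concaveOn_and_tendsto (D := {t | ContinuousAt p t}) hr hl
    huint (fun a b ha hab => exists_continuousAt_mem_Ioo hp.2.2.1 ha hab) hp.2.2.1 hlim
  have hp₀ := hp.memP_rpow_mul_rightDeriv hr hρ hq
  refine ⟨_, hp₀, fun x hx => hp.eq_rpow_neg_mul_integral hρ hq hp₀.1 hx,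
    fun z hz hz₀ => hu z hz ?_⟩
  -- `y ^ (ρ - 1) * p₀ y` is the right derivative near `z`
  refine ((continuousAt_rpow_const z (ρ - 1) (Or.inl hz.ne')).fun_mul hz₀).congr ?_
  filter_upwards [Ioi_mem_nhds hz] with y hy
  rw [← mul_assoc, ← rpow_add hy, sub_add_sub_cancel', sub_self, rpow_zero, one_mul]

/-- Monotone density theorem for regularly log-periodic functions. -/
theorem statement_16 (u p : ℝ → ℝ) (r ρ : ℝ) (l : ℝ → ℝ)
    (hr : 1 < r) (hρ : 0 < ρ) (hl : SlowlyVarying l)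
    (hum : Measurable u)
    (huint : ∀ x : ℝ, MeasureTheory.IntegrableOn u (Set.Icc 0 x))
    (humon : UltimatelyMonotone u)
    (hp : MemP r p)
    (hlim : ∀ z > (0:ℝ), ContinuousAt p z →
      Filter.Tendsto
        (fun n : ℕ =>
          (∫ y in (0:ℝ)..(r^n * z), u y) / ((r^n * z) ^ ρ * l (r^n * z)))
        Filter.atTop (nhds (p z))) :
    ∃ p₀ : ℝ → ℝ, MemP r p₀ ∧
      (∀ x > (0:ℝ), p x = x ^ (-ρ) * ∫ y in (0:ℝ)..x, y ^ (ρ - 1) * p₀ y) ∧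
      ∀ z > (0:ℝ), ContinuousAt p₀ z →
        Filter.Tendsto
          (fun n : ℕ => u (r^n * z) / ((r^n * z) ^ (ρ - 1) * l (r^n * z)))
          Filter.atTop (nhds (p₀ z)) :=
  statement_16_general u p r ρ l hr hρ hl huint humon hp hlim
end

section
/- Let X have the generalized St. Petersburg distribution with parameter α = 1: P{X = 2^n} = 2^{−n}, n ≥ 1, with Laplace transform F̂(s) = Σ_{n≥1} e^{−2^n s} 2^{−n}. Then 1 − F̂(s) ∼ s log₂(1/s) as s ↓ 0. -/
/-!
Write `1 - F̂(s) = ∑ₙ (1 - e^{-2ⁿ s}) 2^{-n}` and let `2ᴺ ≤ 1/s < 2ᴺ⁺¹`, so `N = ⌊log₂(1/s)⌋`.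
Since `x - x² ≤ 1 - e^{-x} ≤ x`, each of the `N` terms with `n ≤ N` equals `s` up to `2ⁿ s²`,
and these errors add up to at most `2ᴺ⁺¹ s² ≤ 2s`; the remaining terms are at most
`∑_{n > N} 2^{-n} = 2^{-N} < 2s`. Hence `1 - F̂(s) = s log₂(1/s) + O(s)`, and `log₂(1/s) → ∞`.
-/

open Filter Real Topology Finset

lemma sub_sq_le_one_sub_exp_neg {x : ℝ} (hx : 0 ≤ x) : x - x ^ 2 ≤ 1 - exp (-x) := by
  -- `exp (-x) ≤ 1 / (1 + x) ≤ 1 - x + x ^ 2`, the last step being `1 ≤ 1 + x ^ 3`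
  have h1 := add_one_le_exp x
  have h2 : exp (-x) * exp x = 1 := by rw [← exp_add, neg_add_cancel, exp_zero]
  nlinarith [exp_pos (-x)]

lemma hasSum_one_div_two_pow_succ : HasSum (fun n : ℕ ↦ (1 : ℝ) / 2 ^ (n + 1)) 1 := by
  convert hasSum_geometric_two' 1 using 2 with n
  rw [div_div, pow_succ, mul_comm]

/-- The term of index `n + 1` in `1 - F̂(s) = ∑_{n ≥ 1} (1 - e^{-2ⁿ s}) 2^{-n}`. -/
noncomputable def defectTerm (s : ℝ) (n : ℕ) : ℝ := (1 - exp (-(2 ^ (n + 1) * s))) / 2 ^ (n + 1)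

section defectTerm

variable {s : ℝ}

lemma defectTerm_nonneg (hs : 0 ≤ s) (n : ℕ) : 0 ≤ defectTerm s n := by
  have : exp (-(2 ^ (n + 1) * s)) ≤ 1 := exp_le_one_iff.2 (neg_nonpos.2 (by positivity))
  exact div_nonneg (by linarith) (by positivity)

lemma defectTerm_le_one_div (s : ℝ) (n : ℕ) : defectTerm s n ≤ 1 / 2 ^ (n + 1) := by
  unfold defectTerm
  gcongr
  linarith [exp_pos (-(2 ^ (n + 1) * s))]

lemma defectTerm_le (s : ℝ) (n : ℕ) : defectTerm s n ≤ s := by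
  unfold defectTerm
  rw [div_le_iff₀ (by positivity)]
  linarith [one_sub_le_exp_neg (2 ^ (n + 1) * s)]

lemma sub_le_defectTerm (hs : 0 ≤ s) (n : ℕ) : s - 2 ^ (n + 1) * s ^ 2 ≤ defectTerm s n := by
  unfold defectTerm
  rw [le_div_iff₀ (by positivity)]
  linarith [sub_sq_le_one_sub_exp_neg (by positivity : 0 ≤ 2 ^ (n + 1) * s)]

lemma summable_defectTerm (hs : 0 ≤ s) : Summable (defectTerm s) :=
  hasSum_one_div_two_pow_succ.summable.of_nonneg_of_le (defectTerm_nonneg hs)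
    (defectTerm_le_one_div s)

lemma sum_range_defectTerm_le (N : ℕ) : ∑ n ∈ range N, defectTerm s n ≤ N * s := by
  simpa using sum_le_sum fun n (_ : n ∈ range N) ↦ defectTerm_le s n

lemma sum_range_two_pow_succ (N : ℕ) : ∑ n ∈ range N, (2 : ℝ) ^ (n + 1) = 2 ^ (N + 1) - 2 := by
  induction N with
  | zero => simp
  | succ N ih => rw [sum_range_succ, ih]; ring

lemma sub_le_sum_range_defectTerm (hs : 0 ≤ s) (N : ℕ) :
    N * s - 2 ^ (N + 1) * s ^ 2 ≤ ∑ n ∈ range N, defectTerm s n := by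
  have h := sum_le_sum fun n (_ : n ∈ range N) ↦ sub_le_defectTerm hs n
  rw [sum_sub_distrib, ← sum_mul, sum_range_two_pow_succ] at h
  simp only [sum_const, card_range, nsmul_eq_mul] at h
  nlinarith

lemma tsum_defectTerm_add_le (hs : 0 ≤ s) (N : ℕ) :
    ∑' n, defectTerm s (n + N) ≤ 1 / 2 ^ N := by
  have hgeom : HasSum (fun n : ℕ ↦ (1 : ℝ) / 2 ^ (n + N + 1)) (1 / 2 ^ N) := by
    have h := hasSum_one_div_two_pow_succ.mul_right (1 / 2 ^ N)
    simp only [div_mul_div_comm, one_mul, ← pow_add, add_right_comm] at h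
    exact h
  exact hasSum_le (fun n ↦ defectTerm_le_one_div s (n + N))
    ((summable_nat_add_iff N).2 (summable_defectTerm hs)).hasSum hgeom

lemma abs_tsum_defectTerm_sub_le (hs : 0 < s) {N : ℕ} (h₁ : 2 ^ N * s ≤ 1)
    (h₂ : 1 ≤ 2 ^ (N + 1) * s) : |∑' n, defectTerm s n - N * s| ≤ 2 * s := by
  rw [← (summable_defectTerm hs.le).sum_add_tsum_nat_add N]
  have hhead_le := sum_range_defectTerm_le (s := s) N
  have hhead_ge := sub_le_sum_range_defectTerm hs.le N
  have htail_le := tsum_defectTerm_add_le hs.le N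
  have htail_ge : 0 ≤ ∑' n, defectTerm s (n + N) :=
    tsum_nonneg fun n ↦ defectTerm_nonneg hs.le (n + N)
  have hsq : 2 ^ (N + 1) * s ^ 2 ≤ 2 * s := by rw [pow_succ]; nlinarith
  have hinv : 1 / 2 ^ N ≤ 2 * s := by
    rw [div_le_iff₀ (by positivity)]; rw [pow_succ] at h₂; linarith
  rw [abs_le]; constructor <;> linarith

lemma two_pow_floor_logb_mul_bounds {s : ℝ} (hs : 0 < s) (hs1 : s ≤ 1) :
    2 ^ ⌊logb 2 (1 / s)⌋₊ * s ≤ 1 ∧ 1 ≤ 2 ^ (⌊logb 2 (1 / s)⌋₊ + 1) * s := by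
  set L := logb 2 (1 / s)
  have hL : 0 ≤ L := logb_nonneg one_lt_two (by rw [one_div]; exact one_le_inv₀ hs |>.2 hs1)
  have hpow : (2 : ℝ) ^ L = 1 / s := rpow_logb two_pos (by norm_num) (by positivity)
  have hfloor : (2 : ℝ) ^ ⌊L⌋₊ ≤ 1 / s := by
    rw [← hpow, ← rpow_natCast]; exact rpow_le_rpow_of_exponent_le one_le_two (Nat.floor_le hL)
  have hceil : 1 / s ≤ (2 : ℝ) ^ (⌊L⌋₊ + 1) := by
    rw [← hpow, ← rpow_natCast, Nat.cast_succ]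
    exact rpow_le_rpow_of_exponent_le one_le_two (Nat.lt_floor_add_one L).le
  rw [le_div_iff₀ hs] at hfloor
  rw [div_le_iff₀ hs] at hceil
  exact ⟨hfloor, hceil⟩

lemma abs_tsum_defectTerm_sub_mul_logb_le (hs : 0 < s) (hs1 : s ≤ 1) :
    |∑' n, defectTerm s n - s * logb 2 (1 / s)| ≤ 3 * s := by
  obtain ⟨h₁, h₂⟩ := two_pow_floor_logb_mul_bounds hs hs1
  have hN := abs_tsum_defectTerm_sub_le hs h₁ h₂
  have hL : 0 ≤ logb 2 (1 / s) :=
    logb_nonneg one_lt_two (by rw [one_div]; exact one_le_inv₀ hs |>.2 hs1)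
  have hfloor : |(⌊logb 2 (1 / s)⌋₊ : ℝ) * s - s * logb 2 (1 / s)| ≤ s := by
    rw [abs_le]
    constructor <;> nlinarith [Nat.floor_le hL, Nat.lt_floor_add_one (logb 2 (1 / s))]
  calc _ ≤ |∑' n, defectTerm s n - ⌊logb 2 (1 / s)⌋₊ * s|
        + |(⌊logb 2 (1 / s)⌋₊ : ℝ) * s - s * logb 2 (1 / s)| := abs_sub_le _ _ _
    _ ≤ 3 * s := by linarith

end defectTerm

lemma one_sub_tsum_exp_eq_tsum_defectTerm {s : ℝ} (hs : 0 ≤ s) :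
    1 - ∑' n : ℕ, exp (-(2 : ℝ) ^ (n + 1) * s) * (2 : ℝ) ^ (-((n : ℝ) + 1))
      = ∑' n, defectTerm s n := by
  have hterm : ∀ n : ℕ, exp (-(2 : ℝ) ^ (n + 1) * s) * (2 : ℝ) ^ (-((n : ℝ) + 1))
      = 1 / 2 ^ (n + 1) - defectTerm s n := by
    intro n
    rw [defectTerm, rpow_neg zero_le_two, ← Nat.cast_succ, rpow_natCast, neg_mul]
    field_simp
    ring
  simp_rw [hterm]
  rw [(hasSum_one_div_two_pow_succ.sub (summable_defectTerm hs).hasSum).tsum_eq]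
  ring

/-- For the St. Petersburg distribution with `α = 1`,
`1 - F̂(s) ∼ s·log₂(1/s)` as `s ↓ 0`, where
`F̂(s) = Σ_{n ≥ 1} e^{-2ⁿ s} 2^{-n}`. -/
theorem statement_19 :
    Filter.Tendsto
      (fun s : ℝ =>
        (1 - ∑' n : ℕ, Real.exp (-(2:ℝ)^(n+1) * s) * (2:ℝ)^(-((n:ℝ)+1))) /
          (s * Real.logb 2 (1/s)))
      (nhdsWithin 0 (Set.Ioi 0)) (nhds 1) := by
  have hlog : Tendsto (fun s : ℝ ↦ logb 2 (1 / s)) (𝓝[>] 0) atTop := by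
    simpa only [one_div, Function.comp_def] using
      (tendsto_logb_atTop one_lt_two).comp tendsto_inv_nhdsGT_zero
  rw [tendsto_iff_norm_sub_tendsto_zero]
  refine squeeze_zero' (Eventually.of_forall fun _ ↦ norm_nonneg _) ?_
    ((tendsto_const_nhds (x := (3 : ℝ))).div_atTop hlog)
  filter_upwards [Ioo_mem_nhdsGT one_pos] with s ⟨hs0, hs1⟩
  have hL : 0 < logb 2 (1 / s) :=
    logb_pos one_lt_two (by rw [one_div]; exact (one_lt_inv₀ hs0).2 hs1)
  have hsL : 0 < s * logb 2 (1 / s) := mul_pos hs0 hL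
  rw [one_sub_tsum_exp_eq_tsum_defectTerm hs0.le, norm_eq_abs, div_sub_one hsL.ne', abs_div,
    abs_of_pos hsL, div_le_div_iff₀ hsL hL]
  nlinarith [abs_tsum_defectTerm_sub_mul_logb_le hs0 hs1.le]
end
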